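/- arXiv:1409.0091 — 7 statements merged into one kernel-verified Lean document; each statement's English description precedes it below -/
import Mathlib

section
/- Let (M⁴,g) be a 4-dimensional orientable Riemannian manifold equipped with a minimal and conformal foliation F of codimension 2, with adapted almost Hermitian structures J₁ and J₂. Then J₁ and J₂ are both cosymplectic (divergence-free) if and only if F is Riemannian and its horizontal distribution H is integrable. -/
open scoped RealInnerProductSpace

noncomputable section

abbrev V4 := EuclideanSpace ℝ (Fin 4)

set_option maxHeartbeats 1600000 in
/-- **Main Theorem.** Let `(M⁴,g)` be a 4-dimensional orientable Riemannian manifold with a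
minimal conformal foliation `F` of codimension 2, modelled here by an adapted orthonormal
frame `{X,Y,Z,W}` (`X,Y` horizontal, `Z,W` vertical), the Lie bracket `br`, the Levi-Civita
connection `nab` (torsion-free and metric) and the adapted almost Hermitian structures
`J₁, J₂`.  Then `J₁` and `J₂` are both cosymplectic (divergence-free) if and only if `F` is
Riemannian and the horizontal distribution is integrable. -/
theorem stmt_0
    (X Y Z W : V4)
    (hON : Orthonormal ℝ ![X, Y, Z, W])
    (hspan : Submodule.span ℝ ({X, Y, Z, W} : Set V4) = ⊤)
    -- the Lie bracket of vector fields
    (br : V4 →ₗ[ℝ] V4 →ₗ[ℝ] V4)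
    (hskew : ∀ u v, br u v = - br v u)
    -- the Levi-Civita connection: torsion-free and metric
    (nab : V4 →ₗ[ℝ] V4 →ₗ[ℝ] V4)
    (htf : ∀ u v, nab u v - nab v u = br u v)
    (hmetric : ∀ u v w, ⟪nab u v, w⟫ + ⟪v, nab u w⟫ = 0)
    -- vertical and horizontal orthogonal projections
    (Vp Hp : V4 →ₗ[ℝ] V4)
    (hVp : ∀ v, Vp v = ⟪v, Z⟫ • Z + ⟪v, W⟫ • W)
    (hHp : ∀ v, Hp v = ⟪v, X⟫ • X + ⟪v, Y⟫ • Y)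
    -- the vertical distribution is involutive
    (hinv : ∀ u v, u ∈ Submodule.span ℝ ({Z, W} : Set V4) →
      v ∈ Submodule.span ℝ ({Z, W} : Set V4) →
      br u v ∈ Submodule.span ℝ ({Z, W} : Set V4))
    -- the foliation F is minimal: trace B^V = 0
    (hmin : Hp (nab Z Z + nab W W) = 0)
    -- the foliation F is conformal: B^H = g ⊗ U for some vertical U
    (hconf : ∃ U ∈ Submodule.span ℝ ({Z, W} : Set V4),
      ∀ E F, E ∈ Submodule.span ℝ ({X, Y} : Set V4) →
        F ∈ Submodule.span ℝ ({X, Y} : Set V4) →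
        Vp (nab E F + nab F E) = (2 * ⟪E, F⟫) • U)
    -- the two adapted almost Hermitian structures
    (J₁ J₂ : V4 →ₗ[ℝ] V4)
    (hJ₁ : J₁ X = Y ∧ J₁ Y = -X ∧ J₁ Z = W ∧ J₁ W = -Z)
    (hJ₂ : J₂ X = Y ∧ J₂ Y = -X ∧ J₂ Z = -W ∧ J₂ W = Z) :
    -- δJ₁ = 0 and δJ₂ = 0  ↔  F is Riemannian and H is integrable
    ((nab X (J₁ X) - J₁ (nab X X)) + (nab Y (J₁ Y) - J₁ (nab Y Y))
        + (nab Z (J₁ Z) - J₁ (nab Z Z)) + (nab W (J₁ W) - J₁ (nab W W)) = 0 ∧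
     (nab X (J₂ X) - J₂ (nab X X)) + (nab Y (J₂ Y) - J₂ (nab Y Y))
        + (nab Z (J₂ Z) - J₂ (nab Z Z)) + (nab W (J₂ W) - J₂ (nab W W)) = 0)
    ↔ ((∀ E F, E ∈ Submodule.span ℝ ({X, Y} : Set V4) →
          F ∈ Submodule.span ℝ ({X, Y} : Set V4) →
          Vp (nab E F + nab F E) = 0) ∧
       (∀ E F, E ∈ Submodule.span ℝ ({X, Y} : Set V4) →
          F ∈ Submodule.span ℝ ({X, Y} : Set V4) →
          br E F ∈ Submodule.span ℝ ({X, Y} : Set V4))) := by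
  -- basic inner product values
  have hip := orthonormal_iff_ite.mp hON
  have pXX : ⟪X,X⟫ = 1 := by simpa using hip 0 0
  have pXY : ⟪X,Y⟫ = 0 := by simpa using hip 0 1
  have pXZ : ⟪X,Z⟫ = 0 := by simpa using hip 0 2
  have pXW : ⟪X,W⟫ = 0 := by simpa using hip 0 3
  have pYX : ⟪Y,X⟫ = 0 := by simpa using hip 1 0
  have pYY : ⟪Y,Y⟫ = 1 := by simpa using hip 1 1
  have pYZ : ⟪Y,Z⟫ = 0 := by simpa using hip 1 2
  have pYW : ⟪Y,W⟫ = 0 := by simpa using hip 1 3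
  have pZX : ⟪Z,X⟫ = 0 := by simpa using hip 2 0
  have pZY : ⟪Z,Y⟫ = 0 := by simpa using hip 2 1
  have pZZ : ⟪Z,Z⟫ = 1 := by simpa using hip 2 2
  have pZW : ⟪Z,W⟫ = 0 := by simpa using hip 2 3
  have pWX : ⟪W,X⟫ = 0 := by simpa using hip 3 0
  have pWY : ⟪W,Y⟫ = 0 := by simpa using hip 3 1
  have pWZ : ⟪W,Z⟫ = 0 := by simpa using hip 3 2
  have pWW : ⟪W,W⟫ = 1 := by simpa using hip 3 3
  -- the representation of a vector in the orthonormal basis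
  have hrep : ∀ v : V4, ⟪v,X⟫ • X + ⟪v,Y⟫ • Y + ⟪v,Z⟫ • Z + ⟪v,W⟫ • W = v := by
    have hrange : Set.range ![X, Y, Z, W] = ({X, Y, Z, W} : Set V4) := by
      ext v
      constructor
      · rintro ⟨i, rfl⟩
        fin_cases i <;> simp
      · intro hv
        rcases hv with rfl | rfl | rfl | rfl
        exacts [⟨0, rfl⟩, ⟨1, rfl⟩, ⟨2, rfl⟩, ⟨3, rfl⟩]
    have hle : ⊤ ≤ Submodule.span ℝ (Set.range ![X, Y, Z, W]) := by rw [hrange, hspan]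
    intro v
    have h := (OrthonormalBasis.mk hON hle).sum_repr' v
    rw [OrthonormalBasis.coe_mk hON hle, Fin.sum_univ_four] at h
    simp only [Matrix.cons_val_zero, Matrix.cons_val_one, Matrix.head_cons,
      Matrix.cons_val_two, Matrix.tail_cons, Matrix.cons_val_three] at h
    calc ⟪v,X⟫ • X + ⟪v,Y⟫ • Y + ⟪v,Z⟫ • Z + ⟪v,W⟫ • W
        = ⟪X,v⟫ • X + ⟪Y,v⟫ • Y + ⟪Z,v⟫ • Z + ⟪W,v⟫ • W := by
          rw [real_inner_comm X v, real_inner_comm Y v, real_inner_comm Z v,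
            real_inner_comm W v]
      _ = v := h
  -- extensionality by inner products with the basis
  have hext : ∀ v w : V4, ⟪v,X⟫ = ⟪w,X⟫ → ⟪v,Y⟫ = ⟪w,Y⟫ → ⟪v,Z⟫ = ⟪w,Z⟫ →
      ⟪v,W⟫ = ⟪w,W⟫ → v = w := by
    intro v w h1 h2 h3 h4
    rw [← hrep v, ← hrep w, h1, h2, h3, h4]
  -- skew symmetry of the connection coefficients
  have hsk : ∀ u v w, ⟪nab u v, w⟫ = -⟪nab u w, v⟫ := by
    intro u v w
    have h1 := hmetric u v w
    have h2 := real_inner_comm v (nab u w)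
    linarith
  have hzd : ∀ u v, ⟪nab u v, v⟫ = 0 := by
    intro u v
    have := hsk u v v
    linarith
  -- membership criteria for the two spans
  have hmemV : ∀ v : V4, v ∈ Submodule.span ℝ ({Z, W} : Set V4) ↔
      (⟪v,X⟫ = 0 ∧ ⟪v,Y⟫ = 0) := by
    intro v
    constructor
    · intro hv
      obtain ⟨a, b, rfl⟩ := Submodule.mem_span_pair.mp hv
      constructor <;>
        · simp only [inner_add_left, real_inner_smul_left, pZX, pZY, pWX, pWY]
          ring
    · rintro ⟨h1, h2⟩
      refine Submodule.mem_span_pair.mpr ⟨⟪v,Z⟫, ⟪v,W⟫, ?_⟩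
      conv_rhs => rw [← hrep v]
      rw [h1, h2]
      simp only [zero_smul, zero_add, add_zero]
  have hmemH : ∀ v : V4, v ∈ Submodule.span ℝ ({X, Y} : Set V4) ↔
      (⟪v,Z⟫ = 0 ∧ ⟪v,W⟫ = 0) := by
    intro v
    constructor
    · intro hv
      obtain ⟨a, b, rfl⟩ := Submodule.mem_span_pair.mp hv
      constructor <;>
        · simp only [inner_add_left, real_inner_smul_left, pXZ, pXW, pYZ, pYW]
          ring
    · rintro ⟨h1, h2⟩
      refine Submodule.mem_span_pair.mpr ⟨⟪v,X⟫, ⟪v,Y⟫, ?_⟩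
      conv_rhs => rw [← hrep v]
      rw [h1, h2]
      simp only [zero_smul, zero_add, add_zero]
  -- inner products with J₁ and J₂
  have hJ1X : ∀ v : V4, ⟪J₁ v, X⟫ = -⟪v,Y⟫ := by
    intro v
    conv_lhs => rw [← hrep v]
    simp only [map_add, map_smul, hJ₁.1, hJ₁.2.1, hJ₁.2.2.1, hJ₁.2.2.2,
      inner_add_left, real_inner_smul_left, inner_neg_left, pXX, pYX, pZX, pWX]
    ring
  have hJ1Y : ∀ v : V4, ⟪J₁ v, Y⟫ = ⟪v,X⟫ := by
    intro v
    conv_lhs => rw [← hrep v]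
    simp only [map_add, map_smul, hJ₁.1, hJ₁.2.1, hJ₁.2.2.1, hJ₁.2.2.2,
      inner_add_left, real_inner_smul_left, inner_neg_left, pXY, pYY, pZY, pWY]
    ring
  have hJ1Z : ∀ v : V4, ⟪J₁ v, Z⟫ = -⟪v,W⟫ := by
    intro v
    conv_lhs => rw [← hrep v]
    simp only [map_add, map_smul, hJ₁.1, hJ₁.2.1, hJ₁.2.2.1, hJ₁.2.2.2,
      inner_add_left, real_inner_smul_left, inner_neg_left, pXZ, pYZ, pZZ, pWZ]
    ring
  have hJ1W : ∀ v : V4, ⟪J₁ v, W⟫ = ⟪v,Z⟫ := by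
    intro v
    conv_lhs => rw [← hrep v]
    simp only [map_add, map_smul, hJ₁.1, hJ₁.2.1, hJ₁.2.2.1, hJ₁.2.2.2,
      inner_add_left, real_inner_smul_left, inner_neg_left, pXW, pYW, pZW, pWW]
    ring
  have hJ2X : ∀ v : V4, ⟪J₂ v, X⟫ = -⟪v,Y⟫ := by
    intro v
    conv_lhs => rw [← hrep v]
    simp only [map_add, map_smul, hJ₂.1, hJ₂.2.1, hJ₂.2.2.1, hJ₂.2.2.2,
      inner_add_left, real_inner_smul_left, inner_neg_left, pXX, pYX, pZX, pWX]
    ring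
  have hJ2Y : ∀ v : V4, ⟪J₂ v, Y⟫ = ⟪v,X⟫ := by
    intro v
    conv_lhs => rw [← hrep v]
    simp only [map_add, map_smul, hJ₂.1, hJ₂.2.1, hJ₂.2.2.1, hJ₂.2.2.2,
      inner_add_left, real_inner_smul_left, inner_neg_left, pXY, pYY, pZY, pWY]
    ring
  have hJ2Z : ∀ v : V4, ⟪J₂ v, Z⟫ = ⟪v,W⟫ := by
    intro v
    conv_lhs => rw [← hrep v]
    simp only [map_add, map_smul, hJ₂.1, hJ₂.2.1, hJ₂.2.2.1, hJ₂.2.2.2,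
      inner_add_left, real_inner_smul_left, inner_neg_left, pXZ, pYZ, pZZ, pWZ]
    ring
  have hJ2W : ∀ v : V4, ⟪J₂ v, W⟫ = -⟪v,Z⟫ := by
    intro v
    conv_lhs => rw [← hrep v]
    simp only [map_add, map_smul, hJ₂.1, hJ₂.2.1, hJ₂.2.2.1, hJ₂.2.2.2,
      inner_add_left, real_inner_smul_left, inner_neg_left, pXW, pYW, pZW, pWW]
    ring
  -- components of projections
  have hHpX : ∀ v : V4, ⟪Hp v, X⟫ = ⟪v,X⟫ := by
    intro v; rw [hHp]; simp only [inner_add_left, real_inner_smul_left, pXX, pYX]; ring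
  have hHpY : ∀ v : V4, ⟪Hp v, Y⟫ = ⟪v,Y⟫ := by
    intro v; rw [hHp]; simp only [inner_add_left, real_inner_smul_left, pXY, pYY]; ring
  have hVpZ : ∀ v : V4, ⟪Vp v, Z⟫ = ⟪v,Z⟫ := by
    intro v; rw [hVp]; simp only [inner_add_left, real_inner_smul_left, pZZ, pWZ]; ring
  have hVpW : ∀ v : V4, ⟪Vp v, W⟫ = ⟪v,W⟫ := by
    intro v; rw [hVp]; simp only [inner_add_left, real_inner_smul_left, pZW, pWW]; ring
  -- components of minimality
  have hminX : ⟪nab Z Z, X⟫ + ⟪nab W W, X⟫ = 0 := by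
    have h : ⟪Hp (nab Z Z + nab W W), X⟫ = 0 := by rw [hmin, inner_zero_left]
    rwa [hHpX, inner_add_left] at h
  have hminY : ⟪nab Z Z, Y⟫ + ⟪nab W W, Y⟫ = 0 := by
    have h : ⟪Hp (nab Z Z + nab W W), Y⟫ = 0 := by rw [hmin, inner_zero_left]
    rwa [hHpY, inner_add_left] at h
  -- conformality: extract U and its components
  obtain ⟨U, hUmem, hU⟩ := hconf
  have hXm : X ∈ Submodule.span ℝ ({X, Y} : Set V4) := Submodule.subset_span (by simp)
  have hYm : Y ∈ Submodule.span ℝ ({X, Y} : Set V4) := Submodule.subset_span (by simp)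
  have hZm : Z ∈ Submodule.span ℝ ({Z, W} : Set V4) := Submodule.subset_span (by simp)
  have hWm : W ∈ Submodule.span ℝ ({Z, W} : Set V4) := Submodule.subset_span (by simp)
  have cXXZ : ⟪nab X X, Z⟫ = ⟪U, Z⟫ := by
    have h := congrArg (fun t => ⟪t, Z⟫) (hU X X hXm hXm)
    simp only [hVpZ, inner_add_left, real_inner_smul_left, pXX] at h
    linarith
  have cXXW : ⟪nab X X, W⟫ = ⟪U, W⟫ := by
    have h := congrArg (fun t => ⟪t, W⟫) (hU X X hXm hXm)
    simp only [hVpW, inner_add_left, real_inner_smul_left, pXX] at h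
    linarith
  have cYYZ : ⟪nab Y Y, Z⟫ = ⟪U, Z⟫ := by
    have h := congrArg (fun t => ⟪t, Z⟫) (hU Y Y hYm hYm)
    simp only [hVpZ, inner_add_left, real_inner_smul_left, pYY] at h
    linarith
  have cYYW : ⟪nab Y Y, W⟫ = ⟪U, W⟫ := by
    have h := congrArg (fun t => ⟪t, W⟫) (hU Y Y hYm hYm)
    simp only [hVpW, inner_add_left, real_inner_smul_left, pYY] at h
    linarith
  -- involutivity components
  have hZW := (hmemV _).mp (hinv Z W hZm hWm)
  have invX : ⟪nab Z W, X⟫ - ⟪nab W Z, X⟫ = 0 := by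
    rw [← inner_sub_left, htf Z W]; exact hZW.1
  have invY : ⟪nab Z W, Y⟫ - ⟪nab W Z, Y⟫ = 0 := by
    rw [← inner_sub_left, htf Z W]; exact hZW.2
  -- the eight components of the two divergences
  have e1X : ⟪(nab X (J₁ X) - J₁ (nab X X)) + (nab Y (J₁ Y) - J₁ (nab Y Y))
      + (nab Z (J₁ Z) - J₁ (nab Z Z)) + (nab W (J₁ W) - J₁ (nab W W)), X⟫ = 0 := by
    simp only [hJ₁.1, hJ₁.2.1, hJ₁.2.2.1, hJ₁.2.2.2, map_neg, inner_add_left,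
      inner_sub_left, inner_neg_left, hJ1X]
    linarith [hsk X Y X, hzd Y X, hzd Y Y, invX, hminY]
  have e1Y : ⟪(nab X (J₁ X) - J₁ (nab X X)) + (nab Y (J₁ Y) - J₁ (nab Y Y))
      + (nab Z (J₁ Z) - J₁ (nab Z Z)) + (nab W (J₁ W) - J₁ (nab W W)), Y⟫ = 0 := by
    simp only [hJ₁.1, hJ₁.2.1, hJ₁.2.2.1, hJ₁.2.2.2, map_neg, inner_add_left,
      inner_sub_left, inner_neg_left, hJ1Y]
    linarith [hzd X Y, hzd X X, hsk Y X Y, invY, hminX]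
  have e1Z : ⟪(nab X (J₁ X) - J₁ (nab X X)) + (nab Y (J₁ Y) - J₁ (nab Y Y))
      + (nab Z (J₁ Z) - J₁ (nab Z Z)) + (nab W (J₁ W) - J₁ (nab W W)), Z⟫
      = (⟪nab X Y, Z⟫ - ⟪nab Y X, Z⟫) + 2*⟪U,W⟫ := by
    simp only [hJ₁.1, hJ₁.2.1, hJ₁.2.2.1, hJ₁.2.2.2, map_neg, inner_add_left,
      inner_sub_left, inner_neg_left, hJ1Z]
    linarith [cXXW, cYYW, hsk Z W Z, hzd W Z, hzd W W]
  have e1W : ⟪(nab X (J₁ X) - J₁ (nab X X)) + (nab Y (J₁ Y) - J₁ (nab Y Y))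
      + (nab Z (J₁ Z) - J₁ (nab Z Z)) + (nab W (J₁ W) - J₁ (nab W W)), W⟫
      = (⟪nab X Y, W⟫ - ⟪nab Y X, W⟫) - 2*⟪U,Z⟫ := by
    simp only [hJ₁.1, hJ₁.2.1, hJ₁.2.2.1, hJ₁.2.2.2, map_neg, inner_add_left,
      inner_sub_left, inner_neg_left, hJ1W]
    linarith [cXXZ, cYYZ, hzd Z W, hzd Z Z, hsk W Z W]
  have e2X : ⟪(nab X (J₂ X) - J₂ (nab X X)) + (nab Y (J₂ Y) - J₂ (nab Y Y))
      + (nab Z (J₂ Z) - J₂ (nab Z Z)) + (nab W (J₂ W) - J₂ (nab W W)), X⟫ = 0 := by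
    simp only [hJ₂.1, hJ₂.2.1, hJ₂.2.2.1, hJ₂.2.2.2, map_neg, inner_add_left,
      inner_sub_left, inner_neg_left, hJ2X]
    linarith [hsk X Y X, hzd Y X, hzd Y Y, invX, hminY]
  have e2Y : ⟪(nab X (J₂ X) - J₂ (nab X X)) + (nab Y (J₂ Y) - J₂ (nab Y Y))
      + (nab Z (J₂ Z) - J₂ (nab Z Z)) + (nab W (J₂ W) - J₂ (nab W W)), Y⟫ = 0 := by
    simp only [hJ₂.1, hJ₂.2.1, hJ₂.2.2.1, hJ₂.2.2.2, map_neg, inner_add_left,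
      inner_sub_left, inner_neg_left, hJ2Y]
    linarith [hzd X Y, hzd X X, hsk Y X Y, invY, hminX]
  have e2Z : ⟪(nab X (J₂ X) - J₂ (nab X X)) + (nab Y (J₂ Y) - J₂ (nab Y Y))
      + (nab Z (J₂ Z) - J₂ (nab Z Z)) + (nab W (J₂ W) - J₂ (nab W W)), Z⟫
      = (⟪nab X Y, Z⟫ - ⟪nab Y X, Z⟫) - 2*⟪U,W⟫ := by
    simp only [hJ₂.1, hJ₂.2.1, hJ₂.2.2.1, hJ₂.2.2.2, map_neg, inner_add_left,
      inner_sub_left, inner_neg_left, hJ2Z]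
    linarith [cXXW, cYYW, hsk Z W Z, hzd W Z, hzd W W]
  have e2W : ⟪(nab X (J₂ X) - J₂ (nab X X)) + (nab Y (J₂ Y) - J₂ (nab Y Y))
      + (nab Z (J₂ Z) - J₂ (nab Z Z)) + (nab W (J₂ W) - J₂ (nab W W)), W⟫
      = (⟪nab X Y, W⟫ - ⟪nab Y X, W⟫) + 2*⟪U,Z⟫ := by
    simp only [hJ₂.1, hJ₂.2.1, hJ₂.2.2.1, hJ₂.2.2.2, map_neg, inner_add_left,
      inner_sub_left, inner_neg_left, hJ2W]
    linarith [cXXZ, cYYZ, hzd Z W, hzd Z Z, hsk W Z W]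
  constructor
  · rintro ⟨h1, h2⟩
    have h1Z : (⟪nab X Y, Z⟫ - ⟪nab Y X, Z⟫) + 2*⟪U,W⟫ = 0 := by
      rw [← e1Z, h1, inner_zero_left]
    have h1W : (⟪nab X Y, W⟫ - ⟪nab Y X, W⟫) - 2*⟪U,Z⟫ = 0 := by
      rw [← e1W, h1, inner_zero_left]
    have h2Z : (⟪nab X Y, Z⟫ - ⟪nab Y X, Z⟫) - 2*⟪U,W⟫ = 0 := by
      rw [← e2Z, h2, inner_zero_left]
    have h2W : (⟪nab X Y, W⟫ - ⟪nab Y X, W⟫) + 2*⟪U,Z⟫ = 0 := by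
      rw [← e2W, h2, inner_zero_left]
    have hUZ : ⟪U,Z⟫ = 0 := by linarith
    have hUW : ⟪U,W⟫ = 0 := by linarith
    have hbZ : ⟪nab X Y, Z⟫ - ⟪nab Y X, Z⟫ = 0 := by linarith
    have hbW : ⟪nab X Y, W⟫ - ⟪nab Y X, W⟫ = 0 := by linarith
    have hUXY := (hmemV U).mp hUmem
    have hU0 : U = 0 := by
      apply hext U 0 <;> rw [inner_zero_left]
      · exact hUXY.1
      · exact hUXY.2
      · exact hUZ
      · exact hUW
    constructor
    · intro E F hE hF
      rw [hU E F hE hF, hU0, smul_zero]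
    · intro E F hE hF
      obtain ⟨a, b, rfl⟩ := Submodule.mem_span_pair.mp hE
      obtain ⟨c, d, rfl⟩ := Submodule.mem_span_pair.mp hF
      have hbrm : br X Y ∈ Submodule.span ℝ ({X, Y} : Set V4) := by
        refine (hmemH _).mpr ⟨?_, ?_⟩
        · rw [← htf X Y, inner_sub_left]; linarith
        · rw [← htf X Y, inner_sub_left]; linarith
      have hXX0 : br X X = 0 := by
        have h2 : (2:ℝ) • br X X = 0 := by
          rw [two_smul]
          nth_rewrite 2 [hskew X X]
          simp
        simpa [smul_eq_zero] using h2
      have hYY0 : br Y Y = 0 := by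
        have h2 : (2:ℝ) • br Y Y = 0 := by
          rw [two_smul]
          nth_rewrite 2 [hskew Y Y]
          simp
        simpa [smul_eq_zero] using h2
      have hYX : br Y X = - br X Y := hskew Y X
      have key : br (a • X + b • Y) (c • X + d • Y) = (a * d - b * c) • br X Y := by
        simp only [map_add, map_smul, LinearMap.add_apply, LinearMap.smul_apply,
          hXX0, hYY0, hYX, smul_zero, zero_add, add_zero, smul_neg]
        module
      rw [key]
      exact Submodule.smul_mem _ _ hbrm
  · rintro ⟨hR, hI⟩
    have hU0 : U = 0 := by
      have h : (2 * ⟪X,X⟫) • U = 0 := (hU X X hXm hXm).symm.trans (hR X X hXm hXm)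
      rw [pXX, mul_one] at h
      simpa [smul_eq_zero] using h
    have hUZ : ⟪U,Z⟫ = 0 := by rw [hU0, inner_zero_left]
    have hUW : ⟪U,W⟫ = 0 := by rw [hU0, inner_zero_left]
    have hbr := (hmemH _).mp (hI X Y hXm hYm)
    have hbZ : ⟪nab X Y, Z⟫ - ⟪nab Y X, Z⟫ = 0 := by
      rw [← inner_sub_left, htf X Y]; exact hbr.1
    have hbW : ⟪nab X Y, W⟫ - ⟪nab Y X, W⟫ = 0 := by
      rw [← inner_sub_left, htf X Y]; exact hbr.2
    constructor
    · apply hext _ 0 <;> rw [inner_zero_left]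
      · exact e1X
      · exact e1Y
      · rw [e1Z]; linarith
      · rw [e1W]; linarith
    · apply hext _ 0 <;> rw [inner_zero_left]
      · exact e2X
      · exact e2Y
      · rw [e2Z]; linarith
      · rw [e2W]; linarith
end
end

section
/- Let (M⁴,g) be a 4-dimensional orientable Riemannian manifold equipped with a minimal and conformal foliation F of codimension 2, with adapted almost Hermitian structures J₁ and J₂. Then J₁ and J₂ are both integrable (vanishing Nijenhuis tensor) if and only if F is totally geodesic. -/
open scoped RealInnerProductSpace

noncomputable section

set_option maxHeartbeats 2000000 in
lemma nij_aux₁ (X Y Z W : V4) (br : V4 →ₗ[ℝ] V4 →ₗ[ℝ] V4) (J : V4 →ₗ[ℝ] V4)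
    (eqzero : ∀ v : V4, ⟪v,X⟫ = 0 → ⟪v,Y⟫ = 0 → ⟪v,Z⟫ = 0 → ⟪v,W⟫ = 0 → v = 0)
    (hskew : ∀ u v, br u v = - br v u)
    (hJX : J X = Y) (hJY : J Y = -X) (hJZ : J Z = W) (hJW : J W = -Z)
    (jX : ∀ v, ⟪J v, X⟫ = -⟪v, Y⟫) (jY : ∀ v, ⟪J v, Y⟫ = ⟪v, X⟫)
    (jZ : ∀ v, ⟪J v, Z⟫ = -⟪v, W⟫) (jW : ∀ v, ⟪J v, W⟫ = ⟪v, Z⟫)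
    (rA3 : ⟪br X Z, Z⟫ = 0) (rB3 : ⟪br Y Z, Z⟫ = 0)
    (rC4 : ⟪br X W, W⟫ = 0) (rD4 : ⟪br Y W, W⟫ = 0)
    (rAC : ⟪br X Z, W⟫ + ⟪br X W, Z⟫ = 0) (rBD : ⟪br Y Z, W⟫ + ⟪br Y W, Z⟫ = 0)
    (rAB1 : ⟪br X Z, X⟫ = ⟪br Y Z, Y⟫) (rAB2 : ⟪br X Z, Y⟫ + ⟪br Y Z, X⟫ = 0)
    (rCD1 : ⟪br X W, X⟫ = ⟪br Y W, Y⟫) (rCD2 : ⟪br X W, Y⟫ + ⟪br Y W, X⟫ = 0) :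
    ∀ x ∈ ({X, Y, Z, W} : Set V4), ∀ y ∈ ({X, Y, Z, W} : Set V4),
      br x y + J (br (J x) y) + J (br x (J y)) - br (J x) (J y) = 0 := by
  have sYX : br Y X = -br X Y := hskew Y X
  have sZX : br Z X = -br X Z := hskew Z X
  have sWX : br W X = -br X W := hskew W X
  have sZY : br Z Y = -br Y Z := hskew Z Y
  have sWY : br W Y = -br Y W := hskew W Y
  have sWZ : br W Z = -br Z W := hskew W Z
  have diag : ∀ u : V4, br u u = 0 := by
    intro u
    have h := hskew u u
    have h2 : (2:ℝ) • br u u = 0 := by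
      rw [two_smul]; nth_rewrite 1 [h]; exact neg_add_cancel _
    exact (smul_eq_zero.mp h2).resolve_left (by norm_num)
  have brXX : br X X = 0 := diag X
  have brYY : br Y Y = 0 := diag Y
  have brZZ : br Z Z = 0 := diag Z
  have brWW : br W W = 0 := diag W
  clear diag
  intro x hx y hy
  rcases hx with rfl | rfl | rfl | rfl <;> rcases hy with rfl | rfl | rfl | rfl <;>
    · simp only [hJX, hJY, hJZ, hJW, map_neg, map_zero, neg_neg,
        sYX, sZX, sWX, sZY, sWY, sWZ, brXX, brYY, brZZ, brWW, LinearMap.neg_apply,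
        LinearMap.zero_apply]
      refine eqzero _ ?_ ?_ ?_ ?_ <;>
        · simp only [inner_add_left, inner_sub_left, inner_neg_left, inner_zero_left,
            jX, jY, jZ, jW, map_neg, map_zero, neg_neg, LinearMap.neg_apply, LinearMap.zero_apply]
          linarith

set_option maxHeartbeats 2000000 in
lemma nij_aux₂ (X Y Z W : V4) (br : V4 →ₗ[ℝ] V4 →ₗ[ℝ] V4) (J : V4 →ₗ[ℝ] V4)
    (eqzero : ∀ v : V4, ⟪v,X⟫ = 0 → ⟪v,Y⟫ = 0 → ⟪v,Z⟫ = 0 → ⟪v,W⟫ = 0 → v = 0)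
    (hskew : ∀ u v, br u v = - br v u)
    (hJX : J X = Y) (hJY : J Y = -X) (hJZ : J Z = -W) (hJW : J W = Z)
    (jX : ∀ v, ⟪J v, X⟫ = -⟪v, Y⟫) (jY : ∀ v, ⟪J v, Y⟫ = ⟪v, X⟫)
    (jZ : ∀ v, ⟪J v, Z⟫ = ⟪v, W⟫) (jW : ∀ v, ⟪J v, W⟫ = -⟪v, Z⟫)
    (rA3 : ⟪br X Z, Z⟫ = 0) (rB3 : ⟪br Y Z, Z⟫ = 0)
    (rC4 : ⟪br X W, W⟫ = 0) (rD4 : ⟪br Y W, W⟫ = 0)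
    (rAC : ⟪br X Z, W⟫ + ⟪br X W, Z⟫ = 0) (rBD : ⟪br Y Z, W⟫ + ⟪br Y W, Z⟫ = 0)
    (rAB1 : ⟪br X Z, X⟫ = ⟪br Y Z, Y⟫) (rAB2 : ⟪br X Z, Y⟫ + ⟪br Y Z, X⟫ = 0)
    (rCD1 : ⟪br X W, X⟫ = ⟪br Y W, Y⟫) (rCD2 : ⟪br X W, Y⟫ + ⟪br Y W, X⟫ = 0) :
    ∀ x ∈ ({X, Y, Z, W} : Set V4), ∀ y ∈ ({X, Y, Z, W} : Set V4),
      br x y + J (br (J x) y) + J (br x (J y)) - br (J x) (J y) = 0 := by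
  have sYX : br Y X = -br X Y := hskew Y X
  have sZX : br Z X = -br X Z := hskew Z X
  have sWX : br W X = -br X W := hskew W X
  have sZY : br Z Y = -br Y Z := hskew Z Y
  have sWY : br W Y = -br Y W := hskew W Y
  have sWZ : br W Z = -br Z W := hskew W Z
  have diag : ∀ u : V4, br u u = 0 := by
    intro u
    have h := hskew u u
    have h2 : (2:ℝ) • br u u = 0 := by
      rw [two_smul]; nth_rewrite 1 [h]; exact neg_add_cancel _
    exact (smul_eq_zero.mp h2).resolve_left (by norm_num)
  have brXX : br X X = 0 := diag X
  have brYY : br Y Y = 0 := diag Y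
  have brZZ : br Z Z = 0 := diag Z
  have brWW : br W W = 0 := diag W
  clear diag
  intro x hx y hy
  rcases hx with rfl | rfl | rfl | rfl <;> rcases hy with rfl | rfl | rfl | rfl <;>
    · simp only [hJX, hJY, hJZ, hJW, map_neg, map_zero, neg_neg,
        sYX, sZX, sWX, sZY, sWY, sWZ, brXX, brYY, brZZ, brWW, LinearMap.neg_apply,
        LinearMap.zero_apply]
      refine eqzero _ ?_ ?_ ?_ ?_ <;>
        · simp only [inner_add_left, inner_sub_left, inner_neg_left, inner_zero_left,
            jX, jY, jZ, jW, map_neg, map_zero, neg_neg, LinearMap.neg_apply, LinearMap.zero_apply]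
          linarith

set_option maxHeartbeats 1000000 in
/-- Let `(M⁴,g)` be a 4-dimensional orientable Riemannian manifold with a minimal conformal
foliation `F` of codimension 2, modelled by an adapted orthonormal frame `{X,Y,Z,W}`
(`X,Y` horizontal, `Z,W` vertical), Lie bracket `br`, Levi-Civita connection `nab` and the
adapted almost Hermitian structures `J₁, J₂`.  Then `J₁` and `J₂` are both integrable
(vanishing Nijenhuis tensor) if and only if `F` is totally geodesic (`B^V ≡ 0`). -/
theorem stmt_1
    (X Y Z W : V4)
    (hON : Orthonormal ℝ ![X, Y, Z, W])
    (hspan : Submodule.span ℝ ({X, Y, Z, W} : Set V4) = ⊤)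
    (br : V4 →ₗ[ℝ] V4 →ₗ[ℝ] V4)
    (hskew : ∀ u v, br u v = - br v u)
    (nab : V4 →ₗ[ℝ] V4 →ₗ[ℝ] V4)
    (htf : ∀ u v, nab u v - nab v u = br u v)
    (hmetric : ∀ u v w, ⟪nab u v, w⟫ + ⟪v, nab u w⟫ = 0)
    (Vp Hp : V4 →ₗ[ℝ] V4)
    (hVp : ∀ v, Vp v = ⟪v, Z⟫ • Z + ⟪v, W⟫ • W)
    (hHp : ∀ v, Hp v = ⟪v, X⟫ • X + ⟪v, Y⟫ • Y)
    -- the vertical distribution is involutive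
    (hinv : ∀ u v, u ∈ Submodule.span ℝ ({Z, W} : Set V4) →
      v ∈ Submodule.span ℝ ({Z, W} : Set V4) →
      br u v ∈ Submodule.span ℝ ({Z, W} : Set V4))
    -- F is minimal
    (hmin : Hp (nab Z Z + nab W W) = 0)
    -- F is conformal
    (hconf : ∃ U ∈ Submodule.span ℝ ({Z, W} : Set V4),
      ∀ E F, E ∈ Submodule.span ℝ ({X, Y} : Set V4) →
        F ∈ Submodule.span ℝ ({X, Y} : Set V4) →
        Vp (nab E F + nab F E) = (2 * ⟪E, F⟫) • U)
    (J₁ J₂ : V4 →ₗ[ℝ] V4)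
    (hJ₁ : J₁ X = Y ∧ J₁ Y = -X ∧ J₁ Z = W ∧ J₁ W = -Z)
    (hJ₂ : J₂ X = Y ∧ J₂ Y = -X ∧ J₂ Z = -W ∧ J₂ W = Z)
    -- the Nijenhuis tensors of J₁ and J₂
    (N₁ N₂ : V4 → V4 → V4)
    (hN₁ : ∀ E F, N₁ E F =
      br E F + J₁ (br (J₁ E) F) + J₁ (br E (J₁ F)) - br (J₁ E) (J₁ F))
    (hN₂ : ∀ E F, N₂ E F =
      br E F + J₂ (br (J₂ E) F) + J₂ (br E (J₂ F)) - br (J₂ E) (J₂ F)) :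
    -- J₁ and J₂ are both integrable  ↔  F is totally geodesic
    ((∀ E F, N₁ E F = 0) ∧ (∀ E F, N₂ E F = 0))
    ↔ (∀ u v, u ∈ Submodule.span ℝ ({Z, W} : Set V4) →
        v ∈ Submodule.span ℝ ({Z, W} : Set V4) →
        Hp (nab u v + nab v u) = 0) := by
  obtain ⟨hJ1X, hJ1Y, hJ1Z, hJ1W⟩ := hJ₁
  obtain ⟨hJ2X, hJ2Y, hJ2Z, hJ2W⟩ := hJ₂
  have hIP := orthonormal_iff_ite.mp hON
  have pXX : ⟪X,X⟫ = 1 := by simpa using hIP 0 0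
  have pXY : ⟪X,Y⟫ = 0 := by simpa using hIP 0 1
  have pXZ : ⟪X,Z⟫ = 0 := by simpa using hIP 0 2
  have pXW : ⟪X,W⟫ = 0 := by simpa using hIP 0 3
  have pYY : ⟪Y,Y⟫ = 1 := by simpa using hIP 1 1
  have pYZ : ⟪Y,Z⟫ = 0 := by simpa using hIP 1 2
  have pYW : ⟪Y,W⟫ = 0 := by simpa using hIP 1 3
  have pZZ : ⟪Z,Z⟫ = 1 := by simpa using hIP 2 2
  have pZW : ⟪Z,W⟫ = 0 := by simpa using hIP 2 3
  have pWW : ⟪W,W⟫ = 1 := by simpa using hIP 3 3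
  have pYX : ⟪Y,X⟫ = 0 := by rw [real_inner_comm]; exact pXY
  have pZX : ⟪Z,X⟫ = 0 := by rw [real_inner_comm]; exact pXZ
  have pWX : ⟪W,X⟫ = 0 := by rw [real_inner_comm]; exact pXW
  have pZY : ⟪Z,Y⟫ = 0 := by rw [real_inner_comm]; exact pYZ
  have pWY : ⟪W,Y⟫ = 0 := by rw [real_inner_comm]; exact pYW
  have pWZ : ⟪W,Z⟫ = 0 := by rw [real_inner_comm]; exact pZW
  have eqzero : ∀ v : V4, ⟪v,X⟫ = 0 → ⟪v,Y⟫ = 0 → ⟪v,Z⟫ = 0 → ⟪v,W⟫ = 0 → v = 0 := by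
    intro v h1 h2 h3 h4
    have hall : ∀ x ∈ Submodule.span ℝ ({X, Y, Z, W} : Set V4), ⟪v, x⟫ = 0 := by
      intro x hx
      induction hx using Submodule.span_induction with
      | mem y hy =>
        rcases hy with rfl | rfl | rfl | rfl
        · exact h1
        · exact h2
        · exact h3
        · exact h4
      | zero => simp
      | add a b _ _ ha hb => rw [inner_add_right, ha, hb]; ring
      | smul r a _ ha => rw [real_inner_smul_right, ha]; ring
    exact inner_self_eq_zero.mp (hall v (by rw [hspan]; trivial))
  have expand : ∀ v : V4, v = ⟪v,X⟫ • X + ⟪v,Y⟫ • Y + ⟪v,Z⟫ • Z + ⟪v,W⟫ • W := by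
    intro v
    have h := eqzero (v - (⟪v,X⟫ • X + ⟪v,Y⟫ • Y + ⟪v,Z⟫ • Z + ⟪v,W⟫ • W)) ?_ ?_ ?_ ?_
    · exact sub_eq_zero.mp h
    all_goals
      simp only [inner_sub_left, inner_add_left, real_inner_smul_left, pXX, pXY, pXZ, pXW,
        pYX, pYY, pYZ, pYW, pZX, pZY, pZZ, pZW, pWX, pWY, pWZ, pWW]
      ring
  have kos : ∀ u v w : V4, 2 * ⟪nab u v, w⟫ = ⟪br u v, w⟫ - ⟪br v w, u⟫ + ⟪br w u, v⟫ := by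
    intro u v w
    have t1 : ⟪br u v, w⟫ = ⟪nab u v, w⟫ - ⟪nab v u, w⟫ := by rw [← htf u v, inner_sub_left]
    have t2 : ⟪br v w, u⟫ = ⟪nab v w, u⟫ - ⟪nab w v, u⟫ := by rw [← htf v w, inner_sub_left]
    have t3 : ⟪br w u, v⟫ = ⟪nab w u, v⟫ - ⟪nab u w, v⟫ := by rw [← htf w u, inner_sub_left]
    have m1 : ⟪nab v w, u⟫ = -⟪nab v u, w⟫ := by
      have h := hmetric v u w; rw [real_inner_comm]; linarith
    have m2 : ⟪nab w v, u⟫ = -⟪nab w u, v⟫ := by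
      have h := hmetric w u v; rw [real_inner_comm]; linarith
    have m3 : ⟪nab u w, v⟫ = -⟪nab u v, w⟫ := by
      have h := hmetric u v w; rw [real_inner_comm]; linarith
    linarith
  have kos2 : ∀ u v w : V4, ⟪nab u v + nab v u, w⟫ = ⟪br w u, v⟫ + ⟪br w v, u⟫ := by
    intro u v w
    have k1 := kos u v w
    have k2 := kos v u w
    have s1 : ⟪br u v, w⟫ = -⟪br v u, w⟫ := by rw [hskew u v, inner_neg_left]
    have s2 : ⟪br v w, u⟫ = -⟪br w v, u⟫ := by rw [hskew v w, inner_neg_left]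
    have s3 : ⟪br u w, v⟫ = -⟪br w u, v⟫ := by rw [hskew u w, inner_neg_left]
    rw [inner_add_left]; linarith
  -- skew facts
  have sYX : br Y X = -br X Y := hskew Y X
  have sZX : br Z X = -br X Z := hskew Z X
  have sWX : br W X = -br X W := hskew W X
  have sZY : br Z Y = -br Y Z := hskew Z Y
  have sWY : br W Y = -br Y W := hskew W Y
  have sWZ : br W Z = -br Z W := hskew W Z
  have diag : ∀ u : V4, br u u = 0 := by
    intro u
    have h := hskew u u
    have h2 : (2:ℝ) • br u u = 0 := by
      rw [two_smul]; nth_rewrite 1 [h]; exact neg_add_cancel _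
    exact (smul_eq_zero.mp h2).resolve_left (by norm_num)
  have brXX : br X X = 0 := diag X
  have brYY : br Y Y = 0 := diag Y
  have brZZ : br Z Z = 0 := diag Z
  have brWW : br W W = 0 := diag W
  -- J component lemmas
  have j1X : ∀ v, ⟪J₁ v, X⟫ = -⟪v, Y⟫ := by
    intro v; conv_lhs => rw [expand v]
    simp only [map_add, map_smul, hJ1X, hJ1Y, hJ1Z, hJ1W, inner_add_left, real_inner_smul_left,
      inner_neg_left, pXX, pXY, pXZ, pXW, pYX, pYY, pYZ, pYW, pZX, pZY, pZZ, pZW, pWX, pWY, pWZ, pWW]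
    ring
  have j1Y : ∀ v, ⟪J₁ v, Y⟫ = ⟪v, X⟫ := by
    intro v; conv_lhs => rw [expand v]
    simp only [map_add, map_smul, hJ1X, hJ1Y, hJ1Z, hJ1W, inner_add_left, real_inner_smul_left,
      inner_neg_left, pXX, pXY, pXZ, pXW, pYX, pYY, pYZ, pYW, pZX, pZY, pZZ, pZW, pWX, pWY, pWZ, pWW]
    ring
  have j1Z : ∀ v, ⟪J₁ v, Z⟫ = -⟪v, W⟫ := by
    intro v; conv_lhs => rw [expand v]
    simp only [map_add, map_smul, hJ1X, hJ1Y, hJ1Z, hJ1W, inner_add_left, real_inner_smul_left,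
      inner_neg_left, pXX, pXY, pXZ, pXW, pYX, pYY, pYZ, pYW, pZX, pZY, pZZ, pZW, pWX, pWY, pWZ, pWW]
    ring
  have j1W : ∀ v, ⟪J₁ v, W⟫ = ⟪v, Z⟫ := by
    intro v; conv_lhs => rw [expand v]
    simp only [map_add, map_smul, hJ1X, hJ1Y, hJ1Z, hJ1W, inner_add_left, real_inner_smul_left,
      inner_neg_left, pXX, pXY, pXZ, pXW, pYX, pYY, pYZ, pYW, pZX, pZY, pZZ, pZW, pWX, pWY, pWZ, pWW]
    ring
  have j2X : ∀ v, ⟪J₂ v, X⟫ = -⟪v, Y⟫ := by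
    intro v; conv_lhs => rw [expand v]
    simp only [map_add, map_smul, hJ2X, hJ2Y, hJ2Z, hJ2W, inner_add_left, real_inner_smul_left,
      inner_neg_left, pXX, pXY, pXZ, pXW, pYX, pYY, pYZ, pYW, pZX, pZY, pZZ, pZW, pWX, pWY, pWZ, pWW]
    ring
  have j2Y : ∀ v, ⟪J₂ v, Y⟫ = ⟪v, X⟫ := by
    intro v; conv_lhs => rw [expand v]
    simp only [map_add, map_smul, hJ2X, hJ2Y, hJ2Z, hJ2W, inner_add_left, real_inner_smul_left,
      inner_neg_left, pXX, pXY, pXZ, pXW, pYX, pYY, pYZ, pYW, pZX, pZY, pZZ, pZW, pWX, pWY, pWZ, pWW]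
    ring
  have j2Z : ∀ v, ⟪J₂ v, Z⟫ = ⟪v, W⟫ := by
    intro v; conv_lhs => rw [expand v]
    simp only [map_add, map_smul, hJ2X, hJ2Y, hJ2Z, hJ2W, inner_add_left, real_inner_smul_left,
      inner_neg_left, pXX, pXY, pXZ, pXW, pYX, pYY, pYZ, pYW, pZX, pZY, pZZ, pZW, pWX, pWY, pWZ, pWW]
    ring
  have j2W : ∀ v, ⟪J₂ v, W⟫ = -⟪v, Z⟫ := by
    intro v; conv_lhs => rw [expand v]
    simp only [map_add, map_smul, hJ2X, hJ2Y, hJ2Z, hJ2W, inner_add_left, real_inner_smul_left,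
      inner_neg_left, pXX, pXY, pXZ, pXW, pYX, pYY, pYZ, pYW, pZX, pZY, pZZ, pZW, pWX, pWY, pWZ, pWW]
    ring
  have compH : ∀ t : V4, Hp t = 0 → ⟪t, X⟫ = 0 ∧ ⟪t, Y⟫ = 0 := by
    intro t ht
    have hX := congrArg (fun s : V4 => (⟪s, X⟫ : ℝ)) ht
    have hY := congrArg (fun s : V4 => (⟪s, Y⟫ : ℝ)) ht
    simp only [hHp, inner_add_left, real_inner_smul_left, pXX, pYX, pXY, pYY,
      inner_zero_left] at hX hY
    constructor <;> linarith
  have hZmem : Z ∈ Submodule.span ℝ ({Z, W} : Set V4) := Submodule.subset_span (by simp)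
  have hWmem : W ∈ Submodule.span ℝ ({Z, W} : Set V4) := Submodule.subset_span (by simp)
  constructor
  · rintro ⟨h1, h2⟩
    -- components of N₁(X,Z) = 0
    have E1 : br X Z + J₁ (br (J₁ X) Z) + J₁ (br X (J₁ Z)) - br (J₁ X) (J₁ Z) = 0 :=
      (hN₁ X Z).symm.trans (h1 X Z)
    have E2 : br X Z + J₂ (br (J₂ X) Z) + J₂ (br X (J₂ Z)) - br (J₂ X) (J₂ Z) = 0 :=
      (hN₂ X Z).symm.trans (h2 X Z)
    rw [hJ1X, hJ1Z] at E1
    rw [hJ2X, hJ2Z] at E2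
    have e1Z := congrArg (fun t : V4 => (⟪t, Z⟫ : ℝ)) E1
    have e1W := congrArg (fun t : V4 => (⟪t, W⟫ : ℝ)) E1
    have e2Z := congrArg (fun t : V4 => (⟪t, Z⟫ : ℝ)) E2
    have e2W := congrArg (fun t : V4 => (⟪t, W⟫ : ℝ)) E2
    simp only [map_neg, inner_add_left, inner_sub_left, inner_neg_left, j1Z, j1W, j2Z, j2W,
      inner_zero_left] at e1Z e1W e2Z e2W
    -- minimality components
    have hm := compH _ hmin
    have hmX := hm.1
    have hmY := hm.2
    have kZZX := kos Z Z X
    have kWWX := kos W W X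
    have kZZY := kos Z Z Y
    have kWWY := kos W W Y
    rw [inner_add_left] at hmX hmY
    have cZX : ∀ e : V4, ⟪br Z X, e⟫ = -⟪br X Z, e⟫ := fun e => by rw [sZX, inner_neg_left]
    have cWX : ∀ e : V4, ⟪br W X, e⟫ = -⟪br X W, e⟫ := fun e => by rw [sWX, inner_neg_left]
    have cZY : ∀ e : V4, ⟪br Z Y, e⟫ = -⟪br Y Z, e⟫ := fun e => by rw [sZY, inner_neg_left]
    have cWY : ∀ e : V4, ⟪br W Y, e⟫ = -⟪br Y W, e⟫ := fun e => by rw [sWY, inner_neg_left]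
    have zZZ : ∀ e : V4, ⟪br Z Z, e⟫ = 0 := fun e => by rw [brZZ, inner_zero_left]
    have zWW : ∀ e : V4, ⟪br W W, e⟫ = 0 := fun e => by rw [brWW, inner_zero_left]
    -- derived relations
    have hA3 : ⟪br X Z, Z⟫ = 0 := by
      have := cZX Z; have := zZZ X; have := cWX W; have := zWW X
      linarith [kZZX, kWWX, hmX, e1Z, e2Z, cZX Z, zZZ X, cWX W, zWW X]
    have hC4 : ⟪br X W, W⟫ = 0 := by
      linarith [kZZX, kWWX, hmX, e1Z, e2Z, cZX Z, zZZ X, cWX W, zWW X]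
    have hAC : ⟪br X Z, W⟫ + ⟪br X W, Z⟫ = 0 := by
      linarith [e1W, e2W]
    have hB3 : ⟪br Y Z, Z⟫ = 0 := by
      linarith [kZZY, kWWY, hmY, e1W, e2W, cZY Z, zZZ Y, cWY W, zWW Y]
    have hD4 : ⟪br Y W, W⟫ = 0 := by
      linarith [kZZY, kWWY, hmY, e1W, e2W, cZY Z, zZZ Y, cWY W, zWW Y]
    have hBD : ⟪br Y Z, W⟫ + ⟪br Y W, Z⟫ = 0 := by
      linarith [e1Z, e2Z]
    intro u v hu hv
    obtain ⟨a, b, hab⟩ := Submodule.mem_span_pair.mp hu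
    obtain ⟨c, d, hcd⟩ := Submodule.mem_span_pair.mp hv
    rw [hHp]
    have gX : ⟪nab u v + nab v u, X⟫ = 0 := by
      rw [kos2 u v X, ← hab, ← hcd]
      simp only [map_add, map_smul, inner_add_left, inner_add_right, real_inner_smul_left,
        real_inner_smul_right, LinearMap.add_apply, LinearMap.smul_apply]
      linear_combination (2*a*c)*hA3 + (a*d+b*c)*hAC + (2*b*d)*hC4
    have gY : ⟪nab u v + nab v u, Y⟫ = 0 := by
      rw [kos2 u v Y, ← hab, ← hcd]
      simp only [map_add, map_smul, inner_add_left, inner_add_right, real_inner_smul_left,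
        real_inner_smul_right, LinearMap.add_apply, LinearMap.smul_apply]
      linear_combination (2*a*c)*hB3 + (a*d+b*c)*hBD + (2*b*d)*hD4
    rw [gX, gY]
    simp
  · intro hg
    -- totally geodesic relations
    have g1 := compH _ (hg Z Z hZmem hZmem)
    have g2 := compH _ (hg W W hWmem hWmem)
    have g3 := compH _ (hg Z W hZmem hWmem)
    rw [kos2 Z Z X] at g1
    rw [kos2 Z Z Y] at g1
    rw [kos2 W W X] at g2
    rw [kos2 W W Y] at g2
    rw [kos2 Z W X] at g3
    rw [kos2 Z W Y] at g3
    have rA3 : ⟪br X Z, Z⟫ = 0 := by linarith [g1.1]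
    have rB3 : ⟪br Y Z, Z⟫ = 0 := by linarith [g1.2]
    have rC4 : ⟪br X W, W⟫ = 0 := by linarith [g2.1]
    have rD4 : ⟪br Y W, W⟫ = 0 := by linarith [g2.2]
    have rAC : ⟪br X Z, W⟫ + ⟪br X W, Z⟫ = 0 := by linarith [g3.1]
    have rBD : ⟪br Y Z, W⟫ + ⟪br Y W, Z⟫ = 0 := by linarith [g3.2]
    -- conformality relations
    obtain ⟨U, hUmem, hCf⟩ := hconf
    have hXmem : X ∈ Submodule.span ℝ ({X, Y} : Set V4) := Submodule.subset_span (by simp)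
    have hYmem : Y ∈ Submodule.span ℝ ({X, Y} : Set V4) := Submodule.subset_span (by simp)
    have cXX := hCf X X hXmem hXmem
    have cYY := hCf Y Y hYmem hYmem
    have cXY := hCf X Y hXmem hYmem
    have compV : ∀ (t : V4) (r : ℝ), Vp t = r • U →
        (⟪t, Z⟫ = r * ⟪U, Z⟫ ∧ ⟪t, W⟫ = r * ⟪U, W⟫) := by
      intro t r ht
      have hZ' := congrArg (fun s : V4 => (⟪s, Z⟫ : ℝ)) ht
      have hW' := congrArg (fun s : V4 => (⟪s, W⟫ : ℝ)) ht
      simp only [hVp, inner_add_left, real_inner_smul_left, pZZ, pZW, pWZ, pWW] at hZ' hW'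
      constructor <;> linarith
    have vXX := compV _ _ (by rw [cXX, pXX])
    have vYY := compV _ _ (by rw [cYY, pYY])
    have vXY := compV _ _ (by rw [cXY, pXY])
    rw [kos2 X X Z] at vXX
    rw [kos2 X X W] at vXX
    rw [kos2 Y Y Z] at vYY
    rw [kos2 Y Y W] at vYY
    rw [kos2 X Y Z] at vXY
    rw [kos2 X Y W] at vXY
    have cZX : ∀ e : V4, ⟪br Z X, e⟫ = -⟪br X Z, e⟫ := fun e => by rw [sZX, inner_neg_left]
    have cWX : ∀ e : V4, ⟪br W X, e⟫ = -⟪br X W, e⟫ := fun e => by rw [sWX, inner_neg_left]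
    have cZY : ∀ e : V4, ⟪br Z Y, e⟫ = -⟪br Y Z, e⟫ := fun e => by rw [sZY, inner_neg_left]
    have cWY : ∀ e : V4, ⟪br W Y, e⟫ = -⟪br Y W, e⟫ := fun e => by rw [sWY, inner_neg_left]
    have rAB1 : ⟪br X Z, X⟫ = ⟪br Y Z, Y⟫ := by
      linarith [vXX.1, vYY.1, cZX X, cZY Y]
    have rCD1 : ⟪br X W, X⟫ = ⟪br Y W, Y⟫ := by
      linarith [vXX.2, vYY.2, cWX X, cWY Y]
    have rAB2 : ⟪br X Z, Y⟫ + ⟪br Y Z, X⟫ = 0 := by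
      linarith [vXY.1, cZX Y, cZY X]
    have rCD2 : ⟪br X W, Y⟫ + ⟪br Y W, X⟫ = 0 := by
      linarith [vXY.2, cWX Y, cWY X]
    -- now prove both Nijenhuis tensors vanish
    constructor
    · intro E F
      rw [hN₁]
      have hform : br E F + J₁ (br (J₁ E) F) + J₁ (br E (J₁ F)) - br (J₁ E) (J₁ F)
          = (br + (br.comp J₁).compr₂ J₁ + (br.compl₂ J₁).compr₂ J₁
              - (br.comp J₁).compl₂ J₁) E F := by
        simp [LinearMap.compr₂_apply, LinearMap.compl₂_apply, LinearMap.comp_apply,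
          LinearMap.add_apply, LinearMap.sub_apply]
      rw [hform]
      have hz : (br + (br.comp J₁).compr₂ J₁ + (br.compl₂ J₁).compr₂ J₁
          - (br.comp J₁).compl₂ J₁) = 0 := by
        apply LinearMap.ext_on hspan
        intro x hx
        apply LinearMap.ext_on hspan
        intro y hy
        have hkey := nij_aux₁ X Y Z W br J₁ eqzero hskew hJ1X hJ1Y hJ1Z hJ1W
          j1X j1Y j1Z j1W rA3 rB3 rC4 rD4 rAC rBD rAB1 rAB2 rCD1 rCD2 x hx y hy
        simpa only [LinearMap.zero_apply, LinearMap.add_apply, LinearMap.sub_apply,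
          LinearMap.compr₂_apply, LinearMap.compl₂_apply, LinearMap.comp_apply] using hkey
      rw [hz]
      rfl
    · intro E F
      rw [hN₂]
      have hform : br E F + J₂ (br (J₂ E) F) + J₂ (br E (J₂ F)) - br (J₂ E) (J₂ F)
          = (br + (br.comp J₂).compr₂ J₂ + (br.compl₂ J₂).compr₂ J₂
              - (br.comp J₂).compl₂ J₂) E F := by
        simp [LinearMap.compr₂_apply, LinearMap.compl₂_apply, LinearMap.comp_apply,
          LinearMap.add_apply, LinearMap.sub_apply]
      rw [hform]
      have hz : (br + (br.comp J₂).compr₂ J₂ + (br.compl₂ J₂).compr₂ J₂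
          - (br.comp J₂).compl₂ J₂) = 0 := by
        apply LinearMap.ext_on hspan
        intro x hx
        apply LinearMap.ext_on hspan
        intro y hy
        have hkey := nij_aux₂ X Y Z W br J₂ eqzero hskew hJ2X hJ2Y hJ2Z hJ2W
          j2X j2Y j2Z j2W rA3 rB3 rC4 rD4 rAC rBD rAB1 rAB2 rCD1 rCD2 x hx y hy
        simpa only [LinearMap.zero_apply, LinearMap.add_apply, LinearMap.sub_apply,
          LinearMap.compr₂_apply, LinearMap.compl₂_apply, LinearMap.comp_apply] using hkey
      rw [hz]
      rfl
end
end

section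
/- In the 4-dimensional Lie algebra setting with orthonormal basis {X,Y,Z,W}, vertical distribution V=span{Z,W}, horizontal H=span{X,Y}, and bracket relations as above, the divergence of the adapted almost Hermitian structure J₁ is δJ₁ = −(θ₁−2a)Z − (θ₂+2α)W. Consequently J₁ is cosymplectic if and only if θ₁ = 2a and θ₂ = −2α. -/
open scoped RealInnerProductSpace

noncomputable section

/-- In the 4-dimensional Lie algebra setting with orthonormal basis {X,Y,Z,W} and the
stated bracket relations, the divergence of the adapted almost Hermitian structure J₁,
δJ₁ = [X,Y] − [W,Z] − J₁(∇_X X + ∇_Y Y + ∇_Z Z + ∇_W W), equals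
−(θ₁−2a)Z − (θ₂+2α)W.  Consequently J₁ is cosymplectic iff θ₁ = 2a and θ₂ = −2α. -/
theorem stmt_6
    (X Y Z W : V4)
    (hON : Orthonormal ℝ ![X, Y, Z, W])
    (hspan : Submodule.span ℝ ({X, Y, Z, W} : Set V4) = ⊤)
    (lam α β a b r z₁ z₂ z₃ z₄ w₁ w₂ θ₁ θ₂ : ℝ)
    (br : V4 →ₗ[ℝ] V4 →ₗ[ℝ] V4)
    (hskew : ∀ u v, br u v = - br v u)
    (hWZ : br W Z = lam • W)
    (hZX : br Z X = α • X + β • Y + z₁ • Z + w₁ • W)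
    (hZY : br Z Y = -β • X + α • Y + z₂ • Z + w₂ • W)
    (hWX : br W X = a • X + b • Y + z₃ • Z - z₁ • W)
    (hWY : br W Y = -b • X + a • Y + z₄ • Z - z₂ • W)
    (hYX : br Y X = r • X + θ₁ • Z + θ₂ • W)
    (nab : V4 →ₗ[ℝ] V4 →ₗ[ℝ] V4)
    (hKoszul : ∀ u v w, 2 * ⟪nab u v, w⟫ = ⟪br w u, v⟫ + ⟪br w v, u⟫ + ⟪w, br u v⟫)
    (J₁ : V4 →ₗ[ℝ] V4)
    (hJ₁ : J₁ X = Y ∧ J₁ Y = -X ∧ J₁ Z = W ∧ J₁ W = -Z) :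
    br X Y - br W Z - J₁ (nab X X + nab Y Y + nab Z Z + nab W W)
      = -(θ₁ - 2 * a) • Z - (θ₂ + 2 * α) • W ∧
    (br X Y - br W Z - J₁ (nab X X + nab Y Y + nab Z Z + nab W W) = 0
      ↔ θ₁ = 2 * a ∧ θ₂ = -2 * α) := by
  have hip : ∀ i j : Fin 4, ⟪![X, Y, Z, W] i, ![X, Y, Z, W] j⟫ = if i = j then (1:ℝ) else 0 :=
    orthonormal_iff_ite.mp hON
  have ipXX : ⟪X, X⟫ = (1:ℝ) := by simpa using hip 0 0
  have ipXY : ⟪X, Y⟫ = (0:ℝ) := by simpa using hip 0 1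
  have ipXZ : ⟪X, Z⟫ = (0:ℝ) := by simpa using hip 0 2
  have ipXW : ⟪X, W⟫ = (0:ℝ) := by simpa using hip 0 3
  have ipYX : ⟪Y, X⟫ = (0:ℝ) := by simpa using hip 1 0
  have ipYY : ⟪Y, Y⟫ = (1:ℝ) := by simpa using hip 1 1
  have ipYZ : ⟪Y, Z⟫ = (0:ℝ) := by simpa using hip 1 2
  have ipYW : ⟪Y, W⟫ = (0:ℝ) := by simpa using hip 1 3
  have ipZX : ⟪Z, X⟫ = (0:ℝ) := by simpa using hip 2 0
  have ipZY : ⟪Z, Y⟫ = (0:ℝ) := by simpa using hip 2 1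
  have ipZZ : ⟪Z, Z⟫ = (1:ℝ) := by simpa using hip 2 2
  have ipZW : ⟪Z, W⟫ = (0:ℝ) := by simpa using hip 2 3
  have ipWX : ⟪W, X⟫ = (0:ℝ) := by simpa using hip 3 0
  have ipWY : ⟪W, Y⟫ = (0:ℝ) := by simpa using hip 3 1
  have ipWZ : ⟪W, Z⟫ = (0:ℝ) := by simpa using hip 3 2
  have ipWW : ⟪W, W⟫ = (1:ℝ) := by simpa using hip 3 3
  -- vectors agreeing in inner products with X, Y, Z, W are equal
  have key : ∀ v w : V4, ⟪X, v⟫ = ⟪X, w⟫ → ⟪Y, v⟫ = ⟪Y, w⟫ → ⟪Z, v⟫ = ⟪Z, w⟫ →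
      ⟪W, v⟫ = ⟪W, w⟫ → v = w := by
    intro v w h1 h2 h3 h4
    have hz : ∀ u : V4, ⟪u, v - w⟫ = 0 := by
      intro u
      have hu : u ∈ Submodule.span ℝ ({X, Y, Z, W} : Set V4) := by
        rw [hspan]; trivial
      induction hu using Submodule.span_induction with
      | mem x hx =>
          rcases hx with h | h | h | h
          · rw [h, inner_sub_right, h1, sub_self]
          · rw [h, inner_sub_right, h2, sub_self]
          · rw [h, inner_sub_right, h3, sub_self]
          · rw [h, inner_sub_right, h4, sub_self]
      | zero => simp
      | add x y _ _ hx hy => simp [inner_add_left, hx, hy]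
      | smul c x _ hx => simp [inner_smul_left, hx]
    have h0 : ⟪v - w, v - w⟫ = (0:ℝ) := hz _
    have := inner_self_eq_zero.mp h0
    exact sub_eq_zero.mp this
  have hsq : ∀ u, br u u = 0 := by
    intro u
    have h := hskew u u
    have h2 : (2:ℝ) • br u u = 0 := by
      rw [two_smul]; nth_rewrite 1 [h]; simp
    simpa using smul_eq_zero.mp h2
  have e1 : nab X X = r • Y + α • Z + a • W := by
    apply key
    · have h := hKoszul X X X
      rw [hsq X] at h
      rw [real_inner_comm]
      simp only [inner_add_right, real_inner_smul_right, inner_zero_right, inner_zero_left,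
        ipXX, ipXY, ipXZ, ipXW] at h ⊢
      linarith
    · have h := hKoszul X X Y
      rw [hYX, hsq X] at h
      rw [real_inner_comm]
      simp only [inner_add_left, inner_add_right, real_inner_smul_left,
        real_inner_smul_right, inner_zero_right, inner_zero_left,
        ipXX, ipYY, ipZX, ipWX, ipYX, ipYZ, ipYW] at h ⊢
      linarith
    · have h := hKoszul X X Z
      rw [hZX, hsq X] at h
      rw [real_inner_comm]
      simp only [inner_add_left, inner_add_right, real_inner_smul_left,
        real_inner_smul_right, inner_zero_right, inner_zero_left,
        ipXX, ipYX, ipZX, ipWX, ipZY, ipZZ, ipZW] at h ⊢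
      linarith
    · have h := hKoszul X X W
      rw [hWX, hsq X] at h
      rw [real_inner_comm]
      simp only [inner_add_left, inner_sub_left, inner_add_right,
        real_inner_smul_left, real_inner_smul_right, inner_zero_right, inner_zero_left,
        ipXX, ipYX, ipZX, ipWX, ipWY, ipWZ, ipWW] at h ⊢
      linarith
  have e2 : nab Y Y = α • Z + a • W := by
    apply key
    · have h := hKoszul Y Y X
      rw [hskew X Y, hYX, hsq Y] at h
      rw [real_inner_comm]
      simp only [inner_neg_left, inner_add_left, inner_add_right,
        real_inner_smul_left, real_inner_smul_right, inner_zero_right, inner_zero_left,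
        ipXY, ipZY, ipWY, ipXZ, ipXW] at h ⊢
      linarith
    · have h := hKoszul Y Y Y
      rw [hsq Y] at h
      rw [real_inner_comm]
      simp only [inner_add_right, real_inner_smul_right, inner_zero_right, inner_zero_left,
        ipYY, ipYZ, ipYW] at h ⊢
      linarith
    · have h := hKoszul Y Y Z
      rw [hZY, hsq Y] at h
      rw [real_inner_comm]
      simp only [inner_add_left, inner_neg_left, inner_add_right,
        real_inner_smul_left, real_inner_smul_right, inner_zero_right, inner_zero_left,
        ipXY, ipYY, ipZY, ipWY, ipZZ, ipZW] at h ⊢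
      linarith
    · have h := hKoszul Y Y W
      rw [hWY, hsq Y] at h
      rw [real_inner_comm]
      simp only [inner_add_left, inner_sub_left, inner_neg_left, inner_add_right,
        real_inner_smul_left, real_inner_smul_right, inner_zero_right, inner_zero_left,
        ipXY, ipYY, ipZY, ipWY, ipWZ, ipWW] at h ⊢
      linarith
  have e3 : nab Z Z = -z₁ • X + -z₂ • Y := by
    apply key
    · have h := hKoszul Z Z X
      rw [hskew X Z, hZX, hsq Z] at h
      rw [real_inner_comm]
      simp only [inner_neg_left, inner_add_left, inner_add_right,
        real_inner_smul_left, real_inner_smul_right, inner_zero_right, inner_zero_left,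
        ipXZ, ipYZ, ipZZ, ipWZ, ipXX, ipXY] at h ⊢
      linarith
    · have h := hKoszul Z Z Y
      rw [hskew Y Z, hZY, hsq Z] at h
      rw [real_inner_comm]
      simp only [inner_neg_left, inner_add_left, inner_add_right,
        real_inner_smul_left, real_inner_smul_right, inner_zero_right, inner_zero_left,
        ipXZ, ipYZ, ipZZ, ipWZ, ipYX, ipYY] at h ⊢
      linarith
    · have h := hKoszul Z Z Z
      rw [hsq Z] at h
      rw [real_inner_comm]
      simp only [inner_add_right, real_inner_smul_right, inner_zero_right, inner_zero_left,
        ipZX, ipZY] at h ⊢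
      linarith
    · have h := hKoszul Z Z W
      rw [hWZ, hsq Z] at h
      rw [real_inner_comm]
      simp only [inner_add_right, real_inner_smul_left, real_inner_smul_right,
        inner_zero_right, inner_zero_left, ipWZ, ipWX, ipWY] at h ⊢
      linarith
  have e4 : nab W W = z₁ • X + z₂ • Y + -lam • Z := by
    apply key
    · have h := hKoszul W W X
      rw [hskew X W, hWX, hsq W] at h
      rw [real_inner_comm]
      simp only [inner_neg_left, inner_add_left, inner_sub_left, inner_add_right,
        real_inner_smul_left, real_inner_smul_right, inner_zero_right, inner_zero_left,
        ipXW, ipYW, ipZW, ipWW, ipXX, ipXY, ipXZ] at h ⊢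
      linarith
    · have h := hKoszul W W Y
      rw [hskew Y W, hWY, hsq W] at h
      rw [real_inner_comm]
      simp only [inner_neg_left, inner_add_left, inner_sub_left, inner_add_right,
        real_inner_smul_left, real_inner_smul_right, inner_zero_right, inner_zero_left,
        ipXW, ipYW, ipZW, ipWW, ipYX, ipYY, ipYZ] at h ⊢
      linarith
    · have h := hKoszul W W Z
      rw [hskew Z W, hWZ, hsq W] at h
      rw [real_inner_comm]
      simp only [inner_neg_left, inner_add_right, real_inner_smul_left,
        real_inner_smul_right, inner_zero_right, inner_zero_left,
        ipZW, ipZX, ipZY, ipZZ, ipWW] at h ⊢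
      linarith
    · have h := hKoszul W W W
      rw [hsq W] at h
      rw [real_inner_comm]
      simp only [inner_add_right, real_inner_smul_right, inner_zero_right, inner_zero_left,
        ipWX, ipWY, ipWZ] at h ⊢
      linarith
  obtain ⟨hJX, hJY, hJZ, hJW⟩ := hJ₁
  have hXY' : br X Y = -(r • X + θ₁ • Z + θ₂ • W) := by rw [hskew, hYX]
  have main : br X Y - br W Z - J₁ (nab X X + nab Y Y + nab Z Z + nab W W)
      = -(θ₁ - 2 * a) • Z - (θ₂ + 2 * α) • W := by
    rw [hXY', hWZ, e1, e2, e3, e4]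
    simp only [map_add, map_smul, hJX, hJY, hJZ, hJW]
    module
  refine ⟨main, ?_⟩
  rw [main]
  constructor
  · intro h0
    have hZ0 := congrArg (fun v => ⟪Z, v⟫) h0
    have hW0 := congrArg (fun v => ⟪W, v⟫) h0
    simp only [inner_sub_right, inner_neg_right, real_inner_smul_right,
      ipZZ, ipZW, ipWZ, ipWW, inner_zero_right] at hZ0 hW0
    constructor <;> linarith
  · rintro ⟨h1, h2⟩
    rw [h1, h2]
    module
end
end

section
/- In the same 4-dimensional Lie algebra setting, the adapted almost Hermitian structure J₂ (with J₂X=Y, J₂Z=−W) is cosymplectic if and only if θ₁ = −2a and θ₂ = 2α. Consequently, both J₁ and J₂ are cosymplectic if and only if θ₁=θ₂=α=a=0. -/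
open scoped RealInnerProductSpace

noncomputable section

/-- In the same 4-dimensional Lie algebra setting, the adapted structure J₂
(with J₂X = Y, J₂Z = −W) is cosymplectic iff θ₁ = −2a and θ₂ = 2α; consequently both
J₁ and J₂ are cosymplectic iff θ₁ = θ₂ = α = a = 0. -/
theorem stmt_7
    (X Y Z W : V4)
    (hON : Orthonormal ℝ ![X, Y, Z, W])
    (hspan : Submodule.span ℝ ({X, Y, Z, W} : Set V4) = ⊤)
    (lam α β a b r z₁ z₂ z₃ z₄ w₁ w₂ θ₁ θ₂ : ℝ)
    (br : V4 →ₗ[ℝ] V4 →ₗ[ℝ] V4)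
    (hskew : ∀ u v, br u v = - br v u)
    (hWZ : br W Z = lam • W)
    (hZX : br Z X = α • X + β • Y + z₁ • Z + w₁ • W)
    (hZY : br Z Y = -β • X + α • Y + z₂ • Z + w₂ • W)
    (hWX : br W X = a • X + b • Y + z₃ • Z - z₁ • W)
    (hWY : br W Y = -b • X + a • Y + z₄ • Z - z₂ • W)
    (hYX : br Y X = r • X + θ₁ • Z + θ₂ • W)
    (nab : V4 →ₗ[ℝ] V4 →ₗ[ℝ] V4)
    (hKoszul : ∀ u v w, 2 * ⟪nab u v, w⟫ = ⟪br w u, v⟫ + ⟪br w v, u⟫ + ⟪w, br u v⟫)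
    (J₁ J₂ : V4 →ₗ[ℝ] V4)
    (hJ₁ : J₁ X = Y ∧ J₁ Y = -X ∧ J₁ Z = W ∧ J₁ W = -Z)
    (hJ₂ : J₂ X = Y ∧ J₂ Y = -X ∧ J₂ Z = -W ∧ J₂ W = Z) :
    (br X Y + br W Z - J₂ (nab X X + nab Y Y + nab Z Z + nab W W) = 0
      ↔ θ₁ = -2 * a ∧ θ₂ = 2 * α) ∧
    ((br X Y - br W Z - J₁ (nab X X + nab Y Y + nab Z Z + nab W W) = 0 ∧
      br X Y + br W Z - J₂ (nab X X + nab Y Y + nab Z Z + nab W W) = 0)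
      ↔ θ₁ = 0 ∧ θ₂ = 0 ∧ α = 0 ∧ a = 0) := by
  have o := orthonormal_iff_ite.mp hON
  have iXX : ⟪X, X⟫ = 1 := by simpa using o 0 0
  have iXY : ⟪X, Y⟫ = 0 := by simpa using o 0 1
  have iXZ : ⟪X, Z⟫ = 0 := by simpa using o 0 2
  have iXW : ⟪X, W⟫ = 0 := by simpa using o 0 3
  have iYX : ⟪Y, X⟫ = 0 := by simpa using o 1 0
  have iYY : ⟪Y, Y⟫ = 1 := by simpa using o 1 1
  have iYZ : ⟪Y, Z⟫ = 0 := by simpa using o 1 2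
  have iYW : ⟪Y, W⟫ = 0 := by simpa using o 1 3
  have iZX : ⟪Z, X⟫ = 0 := by simpa using o 2 0
  have iZY : ⟪Z, Y⟫ = 0 := by simpa using o 2 1
  have iZZ : ⟪Z, Z⟫ = 1 := by simpa using o 2 2
  have iZW : ⟪Z, W⟫ = 0 := by simpa using o 2 3
  have iWX : ⟪W, X⟫ = 0 := by simpa using o 3 0
  have iWY : ⟪W, Y⟫ = 0 := by simpa using o 3 1
  have iWZ : ⟪W, Z⟫ = 0 := by simpa using o 3 2
  have iWW : ⟪W, W⟫ = 1 := by simpa using o 3 3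
  -- br u u = 0
  have hself : ∀ u, br u u = 0 := by
    intro u
    have h := hskew u u
    have h2 : (2:ℝ) • br u u = 0 := by
      rw [two_smul]; nth_rewrite 2 [h]; simp
    simpa using h2
  -- ⟪w, nab u u⟫ = ⟪br w u, u⟫
  have kuu : ∀ u w : V4, ⟪w, nab u u⟫ = ⟪br w u, u⟫ := by
    intro u w
    have h := hKoszul u u w
    rw [hself, inner_zero_right] at h
    rw [real_inner_comm]
    linarith
  -- zero test against spanning set
  have key : ∀ v : V4, ⟪X, v⟫ = 0 → ⟪Y, v⟫ = 0 → ⟪Z, v⟫ = 0 → ⟪W, v⟫ = 0 → v = 0 := by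
    intro v h1 h2 h3 h4
    have hall : ∀ u : V4, ⟪u, v⟫ = 0 := by
      intro u
      have hu : u ∈ Submodule.span ℝ ({X, Y, Z, W} : Set V4) := by
        rw [hspan]; exact Submodule.mem_top
      induction hu using Submodule.span_induction with
      | mem x hx =>
        rcases hx with h | h | h | h
        · rw [h]; exact h1
        · rw [h]; exact h2
        · rw [h]; exact h3
        · rw [Set.mem_singleton_iff.mp h]; exact h4
      | zero => simp
      | add x y _ _ hx hy => rw [inner_add_left, hx, hy]; ring
      | smul c x _ hx => rw [real_inner_smul_left, hx]; ring
    have := hall v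
    rwa [inner_self_eq_zero] at this
  -- compute the sum
  set S := nab X X + nab Y Y + nab Z Z + nab W W with hSdef
  have hS : S = r • Y + (2*α - lam) • Z + (2*a) • W := by
    have hsub : S - (r • Y + (2*α - lam) • Z + (2*a) • W) = 0 := by
      apply key
      all_goals
        simp only [hSdef, inner_sub_right, inner_add_right, kuu, real_inner_smul_right,
          hskew X Y, hskew X Z, hskew X W, hskew Y Z, hskew Y W, hskew Z W,
          hself, hYX, hZX, hZY, hWX, hWY, hWZ,
          inner_neg_right, inner_neg_left, inner_add_left, inner_sub_left,
          inner_smul_left, inner_zero_left, map_neg, LinearMap.neg_apply,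
          RCLike.ofReal_real_eq_id, id_eq, starRingEnd_apply, star_trivial,
          iXX, iXY, iXZ, iXW, iYX, iYY, iYZ, iYW, iZX, iZY, iZZ, iZW, iWX, iWY, iWZ, iWW]
        ring
    exact sub_eq_zero.mp hsub
  obtain ⟨hJ2X, hJ2Y, hJ2Z, hJ2W⟩ := hJ₂
  obtain ⟨hJ1X, hJ1Y, hJ1Z, hJ1W⟩ := hJ₁
  have hE₂ : br X Y + br W Z - J₂ S = (-(θ₁ + 2*a)) • Z + (2*α - θ₂) • W := by
    rw [hS, hskew X Y, hYX, hWZ, map_add, map_add, map_smul, map_smul, map_smul,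
      hJ2Y, hJ2Z, hJ2W]
    module
  have hE₁ : br X Y - br W Z - J₁ S = (2*a - θ₁) • Z + (-(θ₂ + 2*α)) • W := by
    rw [hS, hskew X Y, hYX, hWZ, map_add, map_add, map_smul, map_smul, map_smul,
      hJ1Y, hJ1Z, hJ1W]
    module
  have coeff : ∀ c d : ℝ, c • Z + d • W = 0 → c = 0 ∧ d = 0 := by
    intro c d h
    constructor
    · have hz : ⟪Z, c • Z + d • W⟫ = 0 := by rw [h, inner_zero_right]
      simp only [inner_add_right, real_inner_smul_right, iZZ, iZW, mul_one, mul_zero,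
        add_zero] at hz
      exact hz
    · have hw : ⟪W, c • Z + d • W⟫ = 0 := by rw [h, inner_zero_right]
      simp only [inner_add_right, real_inner_smul_right, iWZ, iWW, mul_one, mul_zero,
        zero_add] at hw
      exact hw
  constructor
  · rw [hE₂]
    constructor
    · intro h
      obtain ⟨h1, h2⟩ := coeff _ _ h
      constructor <;> linarith
    · rintro ⟨h1, h2⟩
      rw [h1, h2]
      module
  · rw [hE₁, hE₂]
    constructor
    · rintro ⟨ha, hb⟩
      obtain ⟨h1, h2⟩ := coeff _ _ ha
      obtain ⟨h3, h4⟩ := coeff _ _ hb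
      refine ⟨by linarith, by linarith, by linarith, by linarith⟩
    · rintro ⟨h1, h2, h3, h4⟩
      rw [h1, h2, h3, h4]
      constructor <;> module
end
end

section
/- In the 4-dimensional Lie algebra setting above, the foliation F tangent to V=span{Z,W} is totally geodesic (B^V≡0) if and only if z₁=z₂=0, z₃+w₁=0, and z₄+w₂=0. -/
open scoped RealInnerProductSpace

noncomputable section

/-- In the 4-dimensional Lie algebra setting, the foliation F tangent to V = span{Z,W}
is totally geodesic (B^V ≡ 0, where B^V(u,v) = ½H(∇_u v + ∇_v u)) if and only if
z₁ = z₂ = 0, z₃ + w₁ = 0 and z₄ + w₂ = 0. -/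
theorem stmt_8
    (X Y Z W : V4)
    (hON : Orthonormal ℝ ![X, Y, Z, W])
    (hspan : Submodule.span ℝ ({X, Y, Z, W} : Set V4) = ⊤)
    (lam α β a b r z₁ z₂ z₃ z₄ w₁ w₂ θ₁ θ₂ : ℝ)
    (br : V4 →ₗ[ℝ] V4 →ₗ[ℝ] V4)
    (hskew : ∀ u v, br u v = - br v u)
    (hWZ : br W Z = lam • W)
    (hZX : br Z X = α • X + β • Y + z₁ • Z + w₁ • W)
    (hZY : br Z Y = -β • X + α • Y + z₂ • Z + w₂ • W)
    (hWX : br W X = a • X + b • Y + z₃ • Z - z₁ • W)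
    (hWY : br W Y = -b • X + a • Y + z₄ • Z - z₂ • W)
    (hYX : br Y X = r • X + θ₁ • Z + θ₂ • W)
    (nab : V4 →ₗ[ℝ] V4 →ₗ[ℝ] V4)
    (hKoszul : ∀ u v w, 2 * ⟪nab u v, w⟫ = ⟪br w u, v⟫ + ⟪br w v, u⟫ + ⟪w, br u v⟫)
    (Hp : V4 →ₗ[ℝ] V4)
    (hHp : ∀ v, Hp v = ⟪v, X⟫ • X + ⟪v, Y⟫ • Y) :
    (∀ u v, u ∈ Submodule.span ℝ ({Z, W} : Set V4) →
        v ∈ Submodule.span ℝ ({Z, W} : Set V4) →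
        Hp (nab u v + nab v u) = 0)
      ↔ (z₁ = 0 ∧ z₂ = 0 ∧ z₃ + w₁ = 0 ∧ z₄ + w₂ = 0) := by
  have ho := orthonormal_iff_ite.mp hON
  have iXX : ⟪X, X⟫ = (1:ℝ) := by simpa using ho 0 0
  have iXY : ⟪X, Y⟫ = (0:ℝ) := by simpa using ho 0 1
  have iXZ : ⟪X, Z⟫ = (0:ℝ) := by simpa using ho 0 2
  have iXW : ⟪X, W⟫ = (0:ℝ) := by simpa using ho 0 3
  have iYX : ⟪Y, X⟫ = (0:ℝ) := by simpa using ho 1 0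
  have iYY : ⟪Y, Y⟫ = (1:ℝ) := by simpa using ho 1 1
  have iYZ : ⟪Y, Z⟫ = (0:ℝ) := by simpa using ho 1 2
  have iYW : ⟪Y, W⟫ = (0:ℝ) := by simpa using ho 1 3
  have iZX : ⟪Z, X⟫ = (0:ℝ) := by simpa using ho 2 0
  have iZY : ⟪Z, Y⟫ = (0:ℝ) := by simpa using ho 2 1
  have iZZ : ⟪Z, Z⟫ = (1:ℝ) := by simpa using ho 2 2
  have iZW : ⟪Z, W⟫ = (0:ℝ) := by simpa using ho 2 3
  have iWX : ⟪W, X⟫ = (0:ℝ) := by simpa using ho 3 0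
  have iWY : ⟪W, Y⟫ = (0:ℝ) := by simpa using ho 3 1
  have iWZ : ⟪W, Z⟫ = (0:ℝ) := by simpa using ho 3 2
  have iWW : ⟪W, W⟫ = (1:ℝ) := by simpa using ho 3 3
  -- key identity: inner of symmetrized nabla with w
  have key : ∀ u v w : V4, ⟪nab u v + nab v u, w⟫ = ⟪br w u, v⟫ + ⟪br w v, u⟫ := by
    intro u v w
    have h1 := hKoszul u v w
    have h2 := hKoszul v u w
    rw [hskew v u, inner_neg_right] at h2
    have h3 : ⟪nab u v + nab v u, w⟫ = ⟪nab u v, w⟫ + ⟪nab v u, w⟫ :=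
      inner_add_left _ _ _
    linarith
  -- Hp s = 0 iff both inner products vanish
  have hHp0 : ∀ s : V4, Hp s = 0 ↔ (⟪s, X⟫ = 0 ∧ ⟪s, Y⟫ = 0) := by
    intro s
    rw [hHp]
    constructor
    · intro h
      have hx : ⟪(⟪s, X⟫ • X + ⟪s, Y⟫ • Y : V4), X⟫ = (0:ℝ) := by rw [h]; simp
      have hy : ⟪(⟪s, X⟫ • X + ⟪s, Y⟫ • Y : V4), Y⟫ = (0:ℝ) := by rw [h]; simp
      simp only [inner_add_left, inner_smul_left, RCLike.star_def, starRingEnd_apply,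
        star_trivial, iXX, iYX, iXY, iYY, mul_one, mul_zero, add_zero, zero_add] at hx hy
      exact ⟨hx, hy⟩
    · rintro ⟨h1, h2⟩
      rw [h1, h2]
      simp
  -- elementary inner products with brackets
  have eXZZ : ⟪br X Z, Z⟫ = -z₁ := by
    rw [hskew X Z, hZX]
    simp [inner_add_left, inner_smul_left, iXZ, iYZ, iZZ, iWZ]
    rw [← real_inner_self_eq_norm_sq, iZZ, mul_one]
  have eXZW : ⟪br X Z, W⟫ = -w₁ := by
    rw [hskew X Z, hZX]
    simp [inner_add_left, inner_smul_left, iXW, iYW, iZW, iWW]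
    rw [← real_inner_self_eq_norm_sq, iWW, mul_one]
  have eXWZ : ⟪br X W, Z⟫ = -z₃ := by
    rw [hskew X W, hWX]
    simp [inner_add_left, inner_sub_left, inner_smul_left, iXZ, iYZ, iZZ, iWZ]
    rw [← real_inner_self_eq_norm_sq, iZZ, mul_one]
  have eXWW : ⟪br X W, W⟫ = z₁ := by
    rw [hskew X W, hWX]
    simp [inner_add_left, inner_sub_left, inner_smul_left, iXW, iYW, iZW, iWW]
    rw [← real_inner_self_eq_norm_sq, iWW, mul_one]
  have eYZZ : ⟪br Y Z, Z⟫ = -z₂ := by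
    rw [hskew Y Z, hZY]
    simp [inner_add_left, inner_smul_left, iXZ, iYZ, iZZ, iWZ]
    rw [← real_inner_self_eq_norm_sq, iZZ, mul_one]
  have eYZW : ⟪br Y Z, W⟫ = -w₂ := by
    rw [hskew Y Z, hZY]
    simp [inner_add_left, inner_smul_left, iXW, iYW, iZW, iWW]
    rw [← real_inner_self_eq_norm_sq, iWW, mul_one]
  have eYWZ : ⟪br Y W, Z⟫ = -z₄ := by
    rw [hskew Y W, hWY]
    simp [inner_add_left, inner_sub_left, inner_smul_left, iXZ, iYZ, iZZ, iWZ]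
    rw [← real_inner_self_eq_norm_sq, iZZ, mul_one]
  have eYWW : ⟪br Y W, W⟫ = z₂ := by
    rw [hskew Y W, hWY]
    simp [inner_add_left, inner_sub_left, inner_smul_left, iXW, iYW, iZW, iWW]
    rw [← real_inner_self_eq_norm_sq, iWW, mul_one]
  have memZ : Z ∈ Submodule.span ℝ ({Z, W} : Set V4) :=
    Submodule.subset_span (Set.mem_insert _ _)
  have memW : W ∈ Submodule.span ℝ ({Z, W} : Set V4) :=
    Submodule.subset_span (Set.mem_insert_of_mem _ rfl)
  constructor
  · intro h
    have hZZ := (hHp0 _).mp (h Z Z memZ memZ)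
    have hZW := (hHp0 _).mp (h Z W memZ memW)
    have hWW := (hHp0 _).mp (h W W memW memW)
    rw [key, key] at hZZ hZW hWW
    rw [eXZZ, eYZZ] at hZZ
    rw [eXZW, eXWZ, eYZW, eYWZ] at hZW
    obtain ⟨hz1, hz2⟩ := hZZ
    obtain ⟨hw1, hw2⟩ := hZW
    refine ⟨by linarith, by linarith, by linarith, by linarith⟩
  · rintro ⟨h1, h2, h3, h4⟩ u v hu hv
    obtain ⟨c, d, rfl⟩ := Submodule.mem_span_pair.mp hu
    obtain ⟨c', d', rfl⟩ := Submodule.mem_span_pair.mp hv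
    have hw1 : w₁ = -z₃ := by linarith
    have hw2 : w₂ = -z₄ := by linarith
    subst h1 h2 hw1 hw2
    rw [hHp0, key, key]
    constructor
    · simp only [map_add, map_smul, LinearMap.add_apply, LinearMap.smul_apply,
        inner_add_left, inner_add_right, real_inner_smul_left, real_inner_smul_right,
        eXZZ, eXZW, eXWZ, eXWW]
      ring
    · simp only [map_add, map_smul, LinearMap.add_apply, LinearMap.smul_apply,
        inner_add_left, inner_add_right, real_inner_smul_left, real_inner_smul_right,
        eYZZ, eYZW, eYWZ, eYWW]
      ring
end
end

section
/- In the 4-dimensional Lie algebra setting above, the foliation F tangent to V=span{Z,W} is Riemannian (B^H≡0) if and only if α = 0 and a = 0. -/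
open scoped RealInnerProductSpace

noncomputable section

/-- In the 4-dimensional Lie algebra setting, the foliation F tangent to V = span{Z,W}
is Riemannian (B^H ≡ 0, where B^H(E,F) = ½V(∇_E F + ∇_F E) for horizontal E,F) if and
only if α = 0 and a = 0. -/
theorem stmt_9
    (X Y Z W : V4)
    (hON : Orthonormal ℝ ![X, Y, Z, W])
    (hspan : Submodule.span ℝ ({X, Y, Z, W} : Set V4) = ⊤)
    (lam α β a b r z₁ z₂ z₃ z₄ w₁ w₂ θ₁ θ₂ : ℝ)
    (br : V4 →ₗ[ℝ] V4 →ₗ[ℝ] V4)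
    (hskew : ∀ u v, br u v = - br v u)
    (hWZ : br W Z = lam • W)
    (hZX : br Z X = α • X + β • Y + z₁ • Z + w₁ • W)
    (hZY : br Z Y = -β • X + α • Y + z₂ • Z + w₂ • W)
    (hWX : br W X = a • X + b • Y + z₃ • Z - z₁ • W)
    (hWY : br W Y = -b • X + a • Y + z₄ • Z - z₂ • W)
    (hYX : br Y X = r • X + θ₁ • Z + θ₂ • W)
    (nab : V4 →ₗ[ℝ] V4 →ₗ[ℝ] V4)
    (hKoszul : ∀ u v w, 2 * ⟪nab u v, w⟫ = ⟪br w u, v⟫ + ⟪br w v, u⟫ + ⟪w, br u v⟫)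
    (Vp : V4 →ₗ[ℝ] V4)
    (hVp : ∀ v, Vp v = ⟪v, Z⟫ • Z + ⟪v, W⟫ • W) :
    (∀ E F, E ∈ Submodule.span ℝ ({X, Y} : Set V4) →
        F ∈ Submodule.span ℝ ({X, Y} : Set V4) →
        Vp (nab E F + nab F E) = 0)
      ↔ (α = 0 ∧ a = 0) := by
  have i := orthonormal_iff_ite.mp hON
  have iXX : ⟪X,X⟫ = 1 := by simpa using i 0 0
  have iXY : ⟪X,Y⟫ = 0 := by simpa using i 0 1
  have iXZ : ⟪X,Z⟫ = 0 := by simpa using i 0 2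
  have iXW : ⟪X,W⟫ = 0 := by simpa using i 0 3
  have iYX : ⟪Y,X⟫ = 0 := by simpa using i 1 0
  have iYY : ⟪Y,Y⟫ = 1 := by simpa using i 1 1
  have iYZ : ⟪Y,Z⟫ = 0 := by simpa using i 1 2
  have iYW : ⟪Y,W⟫ = 0 := by simpa using i 1 3
  have iZX : ⟪Z,X⟫ = 0 := by simpa using i 2 0
  have iZY : ⟪Z,Y⟫ = 0 := by simpa using i 2 1
  have iZZ : ⟪Z,Z⟫ = 1 := by simpa using i 2 2
  have iZW : ⟪Z,W⟫ = 0 := by simpa using i 2 3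
  have iWX : ⟪W,X⟫ = 0 := by simpa using i 3 0
  have iWY : ⟪W,Y⟫ = 0 := by simpa using i 3 1
  have iWZ : ⟪W,Z⟫ = 0 := by simpa using i 3 2
  have iWW : ⟪W,W⟫ = 1 := by simpa using i 3 3
  -- br u u = 0
  have hdiag : ∀ u, br u u = 0 := by
    intro u
    have h := hskew u u
    have h2 : (2:ℝ) • br u u = 0 := by
      rw [two_smul]; nth_rewrite 1 [h]; simp
    exact (smul_eq_zero.mp h2).resolve_left (by norm_num)
  -- bracket inner products
  have bZXX : ⟪br Z X, X⟫ = α := by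
    rw [hZX]; simp [inner_add_left, inner_smul_left, iXX, iYX, iZX, iWX]; rw [← real_inner_self_eq_norm_sq, iXX, mul_one]
  have bZXY : ⟪br Z X, Y⟫ = β := by
    rw [hZX]; simp [inner_add_left, inner_smul_left, iXY, iYY, iZY, iWY]; rw [← real_inner_self_eq_norm_sq, iYY, mul_one]
  have bZYX : ⟪br Z Y, X⟫ = -β := by
    rw [hZY]; simp [inner_add_left, inner_smul_left, iXX, iYX, iZX, iWX]; rw [← real_inner_self_eq_norm_sq, iXX, mul_one]
  have bZYY : ⟪br Z Y, Y⟫ = α := by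
    rw [hZY]; simp [inner_add_left, inner_smul_left, iXY, iYY, iZY, iWY]; rw [← real_inner_self_eq_norm_sq, iYY, mul_one]
  have bWXX : ⟪br W X, X⟫ = a := by
    rw [hWX]; simp [inner_add_left, inner_sub_left, inner_smul_left, iXX, iYX, iZX, iWX]; rw [← real_inner_self_eq_norm_sq, iXX, mul_one]
  have bWXY : ⟪br W X, Y⟫ = b := by
    rw [hWX]; simp [inner_add_left, inner_sub_left, inner_smul_left, iXY, iYY, iZY, iWY]; rw [← real_inner_self_eq_norm_sq, iYY, mul_one]
  have bWYX : ⟪br W Y, X⟫ = -b := by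
    rw [hWY]; simp [inner_add_left, inner_sub_left, inner_smul_left, iXX, iYX, iZX, iWX]; rw [← real_inner_self_eq_norm_sq, iXX, mul_one]
  have bWYY : ⟪br W Y, Y⟫ = a := by
    rw [hWY]; simp [inner_add_left, inner_sub_left, inner_smul_left, iXY, iYY, iZY, iWY]; rw [← real_inner_self_eq_norm_sq, iYY, mul_one]
  -- Koszul consequences
  have nZXX : ⟪nab X X, Z⟫ = α := by
    have k := hKoszul X X Z
    rw [bZXX, hdiag X, inner_zero_right] at k; linarith
  have nWXX : ⟪nab X X, W⟫ = a := by
    have k := hKoszul X X W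
    rw [bWXX, hdiag X, inner_zero_right] at k; linarith
  have nZYY : ⟪nab Y Y, Z⟫ = α := by
    have k := hKoszul Y Y Z
    rw [bZYY, hdiag Y, inner_zero_right] at k; linarith
  have nWYY : ⟪nab Y Y, W⟫ = a := by
    have k := hKoszul Y Y W
    rw [bWYY, hdiag Y, inner_zero_right] at k; linarith
  have hXYsum : br X Y + br Y X = 0 := by rw [hskew X Y]; simp
  have nZXY : ⟪nab X Y, Z⟫ + ⟪nab Y X, Z⟫ = 0 := by
    have k1 := hKoszul X Y Z
    have k2 := hKoszul Y X Z
    have hsum : ⟪Z, br X Y⟫ + ⟪Z, br Y X⟫ = 0 := by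
      rw [← inner_add_right, hXYsum, inner_zero_right]
    rw [bZXY, bZYX] at k1 k2; linarith
  have nWXY : ⟪nab X Y, W⟫ + ⟪nab Y X, W⟫ = 0 := by
    have k1 := hKoszul X Y W
    have k2 := hKoszul Y X W
    have hsum : ⟪W, br X Y⟫ + ⟪W, br Y X⟫ = 0 := by
      rw [← inner_add_right, hXYsum, inner_zero_right]
    rw [bWXY, bWYX] at k1 k2; linarith
  have memX : X ∈ Submodule.span ℝ ({X, Y} : Set V4) :=
    Submodule.subset_span (by simp)
  have memY : Y ∈ Submodule.span ℝ ({X, Y} : Set V4) :=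
    Submodule.subset_span (by simp)
  constructor
  · intro h
    have h1 := h X X memX memX
    rw [hVp, inner_add_left, inner_add_left, nZXX, nWXX] at h1
    constructor
    · have h2 := congrArg (fun v => ⟪v, Z⟫) h1
      simp only [inner_add_left, inner_smul_left, inner_zero_left, iZZ, iWZ,
        RCLike.ofReal_real_eq_id, id_eq, conj_trivial] at h2
      have : (α + α) * 1 + (a + a) * 0 = 0 := by simpa using h2
      linarith
    · have h2 := congrArg (fun v => ⟪v, W⟫) h1
      simp only [inner_add_left, inner_smul_left, inner_zero_left, iZW, iWW,
        RCLike.ofReal_real_eq_id, id_eq, conj_trivial] at h2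
      have : (α + α) * 0 + (a + a) * 1 = 0 := by simpa using h2
      linarith
  · rintro ⟨hα, ha⟩ E F hE hF
    obtain ⟨c, d, rfl⟩ := Submodule.mem_span_pair.mp hE
    obtain ⟨c', d', rfl⟩ := Submodule.mem_span_pair.mp hF
    have vXX : Vp (nab X X) = 0 := by
      rw [hVp, nZXX, nWXX, hα, ha]; simp
    have vYY : Vp (nab Y Y) = 0 := by
      rw [hVp, nZYY, nWYY, hα, ha]; simp
    have vXY : Vp (nab X Y) + Vp (nab Y X) = 0 := by
      rw [hVp, hVp]
      match_scalars <;> linarith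
    have vYXeq : Vp (nab Y X) = - Vp (nab X Y) := by
      have := neg_eq_of_add_eq_zero_left vXY
      linear_combination (norm := module) -this
    simp only [map_add, map_smul, LinearMap.add_apply, LinearMap.smul_apply,
      vXX, vYY, vYXeq, smul_zero, smul_neg, add_zero, zero_add]
    module
end
end

section
/- Let (M⁴,g) be an orientable Riemannian 4-manifold with a minimal conformal codimension-2 foliation F, adapted frame {X,Y,Z,W} (X,Y horizontal, Z,W vertical) and adapted almost Hermitian structures J₁, J₂ with Nijenhuis tensors N₁, N₂. Define 1-forms on horizontal vectors by α(E)=2⟨B^V(Z,Z)−B^V(W,W),E⟩ and β(E)=2⟨B^V(Z,W)+B^V(W,Z),E⟩. Then ⟨(N₁+N₂)(X,Z),Z⟩=α(X), ⟨(N₁+N₂)(X,Z),W⟩=β(X), ⟨(N₁−N₂)(X,Z),Z⟩=−β(Y), and ⟨(N₁−N₂)(X,Z),W⟩=α(Y). In particular, under minimality (B^V(Z,Z)+B^V(W,W)=0), the vertical parts of N₁ and N₂ on mixed pairs all vanish if and only if α≡0 and β≡0, i.e. F is totally geodesic. -/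
open scoped RealInnerProductSpace

noncomputable section

set_option maxHeartbeats 1600000 in
/-- Setting of Theorem 5.1: adapted orthonormal frame {X,Y,Z,W} (X,Y horizontal, Z,W
vertical) on an orientable Riemannian 4-manifold with minimal conformal codimension-2
foliation, adapted structures J₁, J₂ with Nijenhuis tensors N₁, N₂, and 1-forms
α(E) = 2⟨B^V(Z,Z) − B^V(W,W), E⟩, β(E) = 2⟨B^V(Z,W) + B^V(W,Z), E⟩.  Then
⟨(N₁+N₂)(X,Z),Z⟩ = α(X), ⟨(N₁+N₂)(X,Z),W⟩ = β(X), ⟨(N₁−N₂)(X,Z),Z⟩ = −β(Y),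
⟨(N₁−N₂)(X,Z),W⟩ = α(Y); and under minimality the vertical parts of N₁, N₂ on mixed
pairs all vanish iff α ≡ 0 and β ≡ 0, i.e. iff the foliation is totally geodesic. -/
theorem stmt_18
    (X Y Z W : V4)
    (hON : Orthonormal ℝ ![X, Y, Z, W])
    (hspan : Submodule.span ℝ ({X, Y, Z, W} : Set V4) = ⊤)
    (br : V4 →ₗ[ℝ] V4 →ₗ[ℝ] V4)
    (hskew : ∀ u v, br u v = - br v u)
    (nab : V4 →ₗ[ℝ] V4 →ₗ[ℝ] V4)
    (htf : ∀ u v, nab u v - nab v u = br u v)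
    (hmetric : ∀ u v w, ⟪nab u v, w⟫ + ⟪v, nab u w⟫ = 0)
    (Vp Hp : V4 →ₗ[ℝ] V4)
    (hVp : ∀ v, Vp v = ⟪v, Z⟫ • Z + ⟪v, W⟫ • W)
    (hHp : ∀ v, Hp v = ⟪v, X⟫ • X + ⟪v, Y⟫ • Y)
    -- the vertical distribution is involutive
    (hinv : ∀ u v, u ∈ Submodule.span ℝ ({Z, W} : Set V4) →
      v ∈ Submodule.span ℝ ({Z, W} : Set V4) →
      br u v ∈ Submodule.span ℝ ({Z, W} : Set V4))
    -- F is conformal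
    (hconf : ∃ U ∈ Submodule.span ℝ ({Z, W} : Set V4),
      ∀ E F, E ∈ Submodule.span ℝ ({X, Y} : Set V4) →
        F ∈ Submodule.span ℝ ({X, Y} : Set V4) →
        Vp (nab E F + nab F E) = (2 * ⟪E, F⟫) • U)
    (J₁ J₂ : V4 →ₗ[ℝ] V4)
    (hJ₁ : J₁ X = Y ∧ J₁ Y = -X ∧ J₁ Z = W ∧ J₁ W = -Z)
    (hJ₂ : J₂ X = Y ∧ J₂ Y = -X ∧ J₂ Z = -W ∧ J₂ W = Z)
    -- the Nijenhuis tensors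
    (N₁ N₂ : V4 → V4 → V4)
    (hN₁ : ∀ E F, N₁ E F =
      br E F + J₁ (br (J₁ E) F) + J₁ (br E (J₁ F)) - br (J₁ E) (J₁ F))
    (hN₂ : ∀ E F, N₂ E F =
      br E F + J₂ (br (J₂ E) F) + J₂ (br E (J₂ F)) - br (J₂ E) (J₂ F))
    -- the 1-forms α and β, built from B^V(Z,Z) = H(∇_Z Z), B^V(W,W) = H(∇_W W),
    -- B^V(Z,W) + B^V(W,Z) = H(∇_Z W + ∇_W Z)
    (αf βf : V4 → ℝ)
    (hα : ∀ E, αf E = 2 * ⟪Hp (nab Z Z) - Hp (nab W W), E⟫)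
    (hβ : ∀ E, βf E = 2 * ⟪Hp (nab Z W + nab W Z), E⟫) :
    ⟪N₁ X Z + N₂ X Z, Z⟫ = αf X ∧
    ⟪N₁ X Z + N₂ X Z, W⟫ = βf X ∧
    ⟪N₁ X Z - N₂ X Z, Z⟫ = -βf Y ∧
    ⟪N₁ X Z - N₂ X Z, W⟫ = αf Y ∧
    -- under minimality, vanishing of all vertical parts of the mixed Nijenhuis values
    -- is equivalent to α ≡ 0 and β ≡ 0, i.e. to F being totally geodesic
    (Hp (nab Z Z + nab W W) = 0 →
      (((Vp (N₁ X Z) = 0 ∧ Vp (N₁ X W) = 0 ∧ Vp (N₁ Y Z) = 0 ∧ Vp (N₁ Y W) = 0 ∧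
         Vp (N₂ X Z) = 0 ∧ Vp (N₂ X W) = 0 ∧ Vp (N₂ Y Z) = 0 ∧ Vp (N₂ Y W) = 0)
        ↔ (αf X = 0 ∧ αf Y = 0 ∧ βf X = 0 ∧ βf Y = 0)) ∧
       ((αf X = 0 ∧ αf Y = 0 ∧ βf X = 0 ∧ βf Y = 0)
        ↔ (∀ u v, u ∈ Submodule.span ℝ ({Z, W} : Set V4) →
            v ∈ Submodule.span ℝ ({Z, W} : Set V4) →
            Hp (nab u v + nab v u) = 0)))) := by
  
  obtain ⟨hJ1X, hJ1Y, hJ1Z, hJ1W⟩ := hJ₁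
  obtain ⟨hJ2X, hJ2Y, hJ2Z, hJ2W⟩ := hJ₂
  have key := orthonormal_iff_ite.mp hON
  have iXX : ⟪X,X⟫ = 1 := by simpa using key 0 0
  have iXY : ⟪X,Y⟫ = 0 := by simpa using key 0 1
  have iXZ : ⟪X,Z⟫ = 0 := by simpa using key 0 2
  have iXW : ⟪X,W⟫ = 0 := by simpa using key 0 3
  have iYX : ⟪Y,X⟫ = 0 := by simpa using key 1 0
  have iYY : ⟪Y,Y⟫ = 1 := by simpa using key 1 1
  have iYZ : ⟪Y,Z⟫ = 0 := by simpa using key 1 2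
  have iYW : ⟪Y,W⟫ = 0 := by simpa using key 1 3
  have iZX : ⟪Z,X⟫ = 0 := by simpa using key 2 0
  have iZY : ⟪Z,Y⟫ = 0 := by simpa using key 2 1
  have iZZ : ⟪Z,Z⟫ = 1 := by simpa using key 2 2
  have iZW : ⟪Z,W⟫ = 0 := by simpa using key 2 3
  have iWX : ⟪W,X⟫ = 0 := by simpa using key 3 0
  have iWY : ⟪W,Y⟫ = 0 := by simpa using key 3 1
  have iWZ : ⟪W,Z⟫ = 0 := by simpa using key 3 2
  have iWW : ⟪W,W⟫ = 1 := by simpa using key 3 3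
  -- expansion in the orthonormal basis
  have hexp : ∀ v : V4, ⟪v,X⟫ • X + ⟪v,Y⟫ • Y + ⟪v,Z⟫ • Z + ⟪v,W⟫ • W = v := by
    intro v
    have hv : v ∈ Submodule.span ℝ ({X, Y, Z, W} : Set V4) := hspan ▸ Submodule.mem_top
    induction hv using Submodule.span_induction with
    | mem x hx =>
      simp only [Set.mem_insert_iff, Set.mem_singleton_iff] at hx
      rcases hx with rfl | rfl | rfl | rfl <;>
        simp only [iXX, iXY, iXZ, iXW, iYX, iYY, iYZ, iYW, iZX, iZY, iZZ, iZW, iWX, iWY, iWZ, iWW,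
          one_smul, zero_smul, add_zero, zero_add]
    | zero => simp
    | add a b ha hb iha ihb =>
      simp only [inner_add_left, add_smul]
      conv_rhs => rw [← iha, ← ihb]
      module
    | smul c a ha ih =>
      simp only [real_inner_smul_left]
      conv_rhs => rw [← ih]
      module
  have hJ1Zc : ∀ v : V4, ⟪J₁ v, Z⟫ = -⟪v, W⟫ := by
    intro v
    conv_lhs => rw [← hexp v]
    simp only [map_add, map_smul, hJ1X, hJ1Y, hJ1Z, hJ1W, smul_neg, inner_add_left, inner_neg_left,
      real_inner_smul_left, iYZ, iXZ, iWZ, iZZ]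
    ring
  have hJ1Wc : ∀ v : V4, ⟪J₁ v, W⟫ = ⟪v, Z⟫ := by
    intro v
    conv_lhs => rw [← hexp v]
    simp only [map_add, map_smul, hJ1X, hJ1Y, hJ1Z, hJ1W, smul_neg, inner_add_left, inner_neg_left,
      real_inner_smul_left, iYW, iXW, iWW, iZW]
    ring
  have hJ2Zc : ∀ v : V4, ⟪J₂ v, Z⟫ = ⟪v, W⟫ := by
    intro v
    conv_lhs => rw [← hexp v]
    simp only [map_add, map_smul, hJ2X, hJ2Y, hJ2Z, hJ2W, smul_neg, inner_add_left, inner_neg_left,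
      real_inner_smul_left, iYZ, iXZ, iWZ, iZZ]
    ring
  have hJ2Wc : ∀ v : V4, ⟪J₂ v, W⟫ = -⟪v, Z⟫ := by
    intro v
    conv_lhs => rw [← hexp v]
    simp only [map_add, map_smul, hJ2X, hJ2Y, hJ2Z, hJ2W, smul_neg, inner_add_left, inner_neg_left,
      real_inner_smul_left, iYW, iXW, iWW, iZW]
    ring
  have han : ∀ u v w : V4, ⟪nab u v, w⟫ = -⟪nab u w, v⟫ := by
    intro u v w
    have h := hmetric u w v
    have h2 : ⟪w, nab u v⟫ = ⟪nab u v, w⟫ := real_inner_comm _ _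
    linarith
  have hz : ∀ u v : V4, ⟪nab u v, v⟫ = 0 := by
    intro u v; have := han u v v; linarith
  have hbrC : ∀ u v w : V4, ⟪br u v, w⟫ = ⟪nab u v, w⟫ - ⟪nab v u, w⟫ := by
    intro u v w; rw [← htf, inner_sub_left]
  have hHpX : ∀ v : V4, ⟪Hp v, X⟫ = ⟪v, X⟫ := by
    intro v
    rw [hHp, inner_add_left, real_inner_smul_left, real_inner_smul_left, iXX, iYX]
    ring
  have hHpY : ∀ v : V4, ⟪Hp v, Y⟫ = ⟪v, Y⟫ := by
    intro v
    rw [hHp, inner_add_left, real_inner_smul_left, real_inner_smul_left, iYY, iXY]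
    ring
  have hαX : αf X = 2 * (⟪nab Z Z, X⟫ - ⟪nab W W, X⟫) := by
    rw [hα, inner_sub_left, hHpX, hHpX]
  have hαY : αf Y = 2 * (⟪nab Z Z, Y⟫ - ⟪nab W W, Y⟫) := by
    rw [hα, inner_sub_left, hHpY, hHpY]
  have hβX : βf X = 2 * (⟪nab Z W, X⟫ + ⟪nab W Z, X⟫) := by
    rw [hβ, hHpX, inner_add_left]
  have hβY : βf Y = 2 * (⟪nab Z W, Y⟫ + ⟪nab W Z, Y⟫) := by
    rw [hβ, hHpY, inner_add_left]
  -- the sixteen vertical components of the mixed Nijenhuis values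
  have c1XZZ : ⟪N₁ X Z, Z⟫ = ⟪nab Z Z,X⟫ - ⟪nab W W,X⟫ - ⟪nab Z W,Y⟫ - ⟪nab W Z,Y⟫ := by
    rw [hN₁, hJ1X, hJ1Z]
    simp only [inner_add_left, inner_sub_left, inner_neg_left, map_neg, LinearMap.neg_apply,
      hJ1Zc, hJ1Wc, hbrC]
    linarith [han Z X Z, han Z X W, han W X Z, han W X W, han Z Y Z, han Z Y W, han W Y Z,
      han W Y W, han X Z W, han Y Z W, hz X Z, hz X W, hz Y Z, hz Y W]
  have c1XZW : ⟪N₁ X Z, W⟫ = ⟪nab Z Z,Y⟫ - ⟪nab W W,Y⟫ + ⟪nab Z W,X⟫ + ⟪nab W Z,X⟫ := by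
    rw [hN₁, hJ1X, hJ1Z]
    simp only [inner_add_left, inner_sub_left, inner_neg_left, map_neg, LinearMap.neg_apply,
      hJ1Zc, hJ1Wc, hbrC]
    linarith [han Z X Z, han Z X W, han W X Z, han W X W, han Z Y Z, han Z Y W, han W Y Z,
      han W Y W, han X Z W, han Y Z W, hz X Z, hz X W, hz Y Z, hz Y W]
  have c1XWZ : ⟪N₁ X W, Z⟫ = ⟪nab Z Z,Y⟫ - ⟪nab W W,Y⟫ + ⟪nab Z W,X⟫ + ⟪nab W Z,X⟫ := by
    rw [hN₁, hJ1X, hJ1W]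
    simp only [inner_add_left, inner_sub_left, inner_neg_left, map_neg, LinearMap.neg_apply,
      hJ1Zc, hJ1Wc, hbrC]
    linarith [han Z X Z, han Z X W, han W X Z, han W X W, han Z Y Z, han Z Y W, han W Y Z,
      han W Y W, han X Z W, han Y Z W, hz X Z, hz X W, hz Y Z, hz Y W]
  have c1XWW : ⟪N₁ X W, W⟫ = -⟪nab Z Z,X⟫ + ⟪nab W W,X⟫ + ⟪nab Z W,Y⟫ + ⟪nab W Z,Y⟫ := by
    rw [hN₁, hJ1X, hJ1W]
    simp only [inner_add_left, inner_sub_left, inner_neg_left, map_neg, LinearMap.neg_apply,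
      hJ1Zc, hJ1Wc, hbrC]
    linarith [han Z X Z, han Z X W, han W X Z, han W X W, han Z Y Z, han Z Y W, han W Y Z,
      han W Y W, han X Z W, han Y Z W, hz X Z, hz X W, hz Y Z, hz Y W]
  have c1YZZ : ⟪N₁ Y Z, Z⟫ = ⟪nab Z Z,Y⟫ - ⟪nab W W,Y⟫ + ⟪nab Z W,X⟫ + ⟪nab W Z,X⟫ := by
    rw [hN₁, hJ1Y, hJ1Z]
    simp only [inner_add_left, inner_sub_left, inner_neg_left, map_neg, LinearMap.neg_apply,
      hJ1Zc, hJ1Wc, hbrC]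
    linarith [han Z X Z, han Z X W, han W X Z, han W X W, han Z Y Z, han Z Y W, han W Y Z,
      han W Y W, han X Z W, han Y Z W, hz X Z, hz X W, hz Y Z, hz Y W]
  have c1YZW : ⟪N₁ Y Z, W⟫ = -⟪nab Z Z,X⟫ + ⟪nab W W,X⟫ + ⟪nab Z W,Y⟫ + ⟪nab W Z,Y⟫ := by
    rw [hN₁, hJ1Y, hJ1Z]
    simp only [inner_add_left, inner_sub_left, inner_neg_left, map_neg, LinearMap.neg_apply,
      hJ1Zc, hJ1Wc, hbrC]
    linarith [han Z X Z, han Z X W, han W X Z, han W X W, han Z Y Z, han Z Y W, han W Y Z,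
      han W Y W, han X Z W, han Y Z W, hz X Z, hz X W, hz Y Z, hz Y W]
  have c1YWZ : ⟪N₁ Y W, Z⟫ = -⟪nab Z Z,X⟫ + ⟪nab W W,X⟫ + ⟪nab Z W,Y⟫ + ⟪nab W Z,Y⟫ := by
    rw [hN₁, hJ1Y, hJ1W]
    simp only [inner_add_left, inner_sub_left, inner_neg_left, map_neg, LinearMap.neg_apply,
      hJ1Zc, hJ1Wc, hbrC]
    linarith [han Z X Z, han Z X W, han W X Z, han W X W, han Z Y Z, han Z Y W, han W Y Z,
      han W Y W, han X Z W, han Y Z W, hz X Z, hz X W, hz Y Z, hz Y W]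
  have c1YWW : ⟪N₁ Y W, W⟫ = -⟪nab Z Z,Y⟫ + ⟪nab W W,Y⟫ - ⟪nab Z W,X⟫ - ⟪nab W Z,X⟫ := by
    rw [hN₁, hJ1Y, hJ1W]
    simp only [inner_add_left, inner_sub_left, inner_neg_left, map_neg, LinearMap.neg_apply,
      hJ1Zc, hJ1Wc, hbrC]
    linarith [han Z X Z, han Z X W, han W X Z, han W X W, han Z Y Z, han Z Y W, han W Y Z,
      han W Y W, han X Z W, han Y Z W, hz X Z, hz X W, hz Y Z, hz Y W]
  have c2XZZ : ⟪N₂ X Z, Z⟫ = ⟪nab Z Z,X⟫ - ⟪nab W W,X⟫ + ⟪nab Z W,Y⟫ + ⟪nab W Z,Y⟫ := by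
    rw [hN₂, hJ2X, hJ2Z]
    simp only [inner_add_left, inner_sub_left, inner_neg_left, map_neg, LinearMap.neg_apply,
      hJ2Zc, hJ2Wc, hbrC]
    linarith [han Z X Z, han Z X W, han W X Z, han W X W, han Z Y Z, han Z Y W, han W Y Z,
      han W Y W, han X Z W, han Y Z W, hz X Z, hz X W, hz Y Z, hz Y W]
  have c2XZW : ⟪N₂ X Z, W⟫ = -⟪nab Z Z,Y⟫ + ⟪nab W W,Y⟫ + ⟪nab Z W,X⟫ + ⟪nab W Z,X⟫ := by
    rw [hN₂, hJ2X, hJ2Z]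
    simp only [inner_add_left, inner_sub_left, inner_neg_left, map_neg, LinearMap.neg_apply,
      hJ2Zc, hJ2Wc, hbrC]
    linarith [han Z X Z, han Z X W, han W X Z, han W X W, han Z Y Z, han Z Y W, han W Y Z,
      han W Y W, han X Z W, han Y Z W, hz X Z, hz X W, hz Y Z, hz Y W]
  have c2XWZ : ⟪N₂ X W, Z⟫ = -⟪nab Z Z,Y⟫ + ⟪nab W W,Y⟫ + ⟪nab Z W,X⟫ + ⟪nab W Z,X⟫ := by
    rw [hN₂, hJ2X, hJ2W]
    simp only [inner_add_left, inner_sub_left, inner_neg_left, map_neg, LinearMap.neg_apply,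
      hJ2Zc, hJ2Wc, hbrC]
    linarith [han Z X Z, han Z X W, han W X Z, han W X W, han Z Y Z, han Z Y W, han W Y Z,
      han W Y W, han X Z W, han Y Z W, hz X Z, hz X W, hz Y Z, hz Y W]
  have c2XWW : ⟪N₂ X W, W⟫ = -⟪nab Z Z,X⟫ + ⟪nab W W,X⟫ - ⟪nab Z W,Y⟫ - ⟪nab W Z,Y⟫ := by
    rw [hN₂, hJ2X, hJ2W]
    simp only [inner_add_left, inner_sub_left, inner_neg_left, map_neg, LinearMap.neg_apply,
      hJ2Zc, hJ2Wc, hbrC]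
    linarith [han Z X Z, han Z X W, han W X Z, han W X W, han Z Y Z, han Z Y W, han W Y Z,
      han W Y W, han X Z W, han Y Z W, hz X Z, hz X W, hz Y Z, hz Y W]
  have c2YZZ : ⟪N₂ Y Z, Z⟫ = ⟪nab Z Z,Y⟫ - ⟪nab W W,Y⟫ - ⟪nab Z W,X⟫ - ⟪nab W Z,X⟫ := by
    rw [hN₂, hJ2Y, hJ2Z]
    simp only [inner_add_left, inner_sub_left, inner_neg_left, map_neg, LinearMap.neg_apply,
      hJ2Zc, hJ2Wc, hbrC]
    linarith [han Z X Z, han Z X W, han W X Z, han W X W, han Z Y Z, han Z Y W, han W Y Z,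
      han W Y W, han X Z W, han Y Z W, hz X Z, hz X W, hz Y Z, hz Y W]
  have c2YZW : ⟪N₂ Y Z, W⟫ = ⟪nab Z Z,X⟫ - ⟪nab W W,X⟫ + ⟪nab Z W,Y⟫ + ⟪nab W Z,Y⟫ := by
    rw [hN₂, hJ2Y, hJ2Z]
    simp only [inner_add_left, inner_sub_left, inner_neg_left, map_neg, LinearMap.neg_apply,
      hJ2Zc, hJ2Wc, hbrC]
    linarith [han Z X Z, han Z X W, han W X Z, han W X W, han Z Y Z, han Z Y W, han W Y Z,
      han W Y W, han X Z W, han Y Z W, hz X Z, hz X W, hz Y Z, hz Y W]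
  have c2YWZ : ⟪N₂ Y W, Z⟫ = ⟪nab Z Z,X⟫ - ⟪nab W W,X⟫ + ⟪nab Z W,Y⟫ + ⟪nab W Z,Y⟫ := by
    rw [hN₂, hJ2Y, hJ2W]
    simp only [inner_add_left, inner_sub_left, inner_neg_left, map_neg, LinearMap.neg_apply,
      hJ2Zc, hJ2Wc, hbrC]
    linarith [han Z X Z, han Z X W, han W X Z, han W X W, han Z Y Z, han Z Y W, han W Y Z,
      han W Y W, han X Z W, han Y Z W, hz X Z, hz X W, hz Y Z, hz Y W]
  have c2YWW : ⟪N₂ Y W, W⟫ = -⟪nab Z Z,Y⟫ + ⟪nab W W,Y⟫ + ⟪nab Z W,X⟫ + ⟪nab W Z,X⟫ := by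
    rw [hN₂, hJ2Y, hJ2W]
    simp only [inner_add_left, inner_sub_left, inner_neg_left, map_neg, LinearMap.neg_apply,
      hJ2Zc, hJ2Wc, hbrC]
    linarith [han Z X Z, han Z X W, han W X Z, han W X W, han Z Y Z, han Z Y W, han W Y Z,
      han W Y W, han X Z W, han Y Z W, hz X Z, hz X W, hz Y Z, hz Y W]
  have hVp0 : ∀ v : V4, Vp v = 0 ↔ (⟪v,Z⟫ = 0 ∧ ⟪v,W⟫ = 0) := by
    intro v
    constructor
    · intro h
      have h1 := congrArg (fun w => ⟪w, Z⟫) h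
      have h2 := congrArg (fun w => ⟪w, W⟫) h
      simp only [inner_zero_left] at h1 h2
      rw [hVp, inner_add_left, real_inner_smul_left, real_inner_smul_left, iZZ, iWZ] at h1
      rw [hVp, inner_add_left, real_inner_smul_left, real_inner_smul_left, iZW, iWW] at h2
      constructor <;> linarith
    · rintro ⟨h1, h2⟩
      rw [hVp, h1, h2]; simp
  refine ⟨?_, ?_, ?_, ?_, ?_⟩
  · rw [inner_add_left, c1XZZ, c2XZZ, hαX]; ring
  · rw [inner_add_left, c1XZW, c2XZW, hβX]; ring
  · rw [inner_sub_left, c1XZZ, c2XZZ, hβY]; ring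
  · rw [inner_sub_left, c1XZW, c2XZW, hαY]; ring
  · intro hmin
    have hminX : ⟪nab Z Z, X⟫ + ⟪nab W W, X⟫ = 0 := by
      have h := congrArg (fun w => ⟪w, X⟫) hmin
      simpa [hHpX, inner_add_left] using h
    have hminY : ⟪nab Z Z, Y⟫ + ⟪nab W W, Y⟫ = 0 := by
      have h := congrArg (fun w => ⟪w, Y⟫) hmin
      simpa [hHpY, inner_add_left] using h
    constructor
    · constructor
      · rintro ⟨h1, -, -, -, h5, -, -, -⟩
        rw [hVp0] at h1 h5
        obtain ⟨h1Z, h1W⟩ := h1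
        obtain ⟨h5Z, h5W⟩ := h5
        rw [c1XZZ] at h1Z; rw [c1XZW] at h1W
        rw [c2XZZ] at h5Z; rw [c2XZW] at h5W
        refine ⟨?_, ?_, ?_, ?_⟩
        · rw [hαX]; linarith
        · rw [hαY]; linarith
        · rw [hβX]; linarith
        · rw [hβY]; linarith
      · rintro ⟨ha1, ha2, hb1, hb2⟩
        rw [hαX] at ha1; rw [hαY] at ha2; rw [hβX] at hb1; rw [hβY] at hb2
        refine ⟨(hVp0 _).mpr ⟨?_, ?_⟩, (hVp0 _).mpr ⟨?_, ?_⟩, (hVp0 _).mpr ⟨?_, ?_⟩,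
          (hVp0 _).mpr ⟨?_, ?_⟩, (hVp0 _).mpr ⟨?_, ?_⟩, (hVp0 _).mpr ⟨?_, ?_⟩,
          (hVp0 _).mpr ⟨?_, ?_⟩, (hVp0 _).mpr ⟨?_, ?_⟩⟩
        · rw [c1XZZ]; linarith
        · rw [c1XZW]; linarith
        · rw [c1XWZ]; linarith
        · rw [c1XWW]; linarith
        · rw [c1YZZ]; linarith
        · rw [c1YZW]; linarith
        · rw [c1YWZ]; linarith
        · rw [c1YWW]; linarith
        · rw [c2XZZ]; linarith
        · rw [c2XZW]; linarith
        · rw [c2XWZ]; linarith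
        · rw [c2XWW]; linarith
        · rw [c2YZZ]; linarith
        · rw [c2YZW]; linarith
        · rw [c2YWZ]; linarith
        · rw [c2YWW]; linarith
    · constructor
      · rintro ⟨ha1, ha2, hb1, hb2⟩
        rw [hαX] at ha1; rw [hαY] at ha2; rw [hβX] at hb1; rw [hβY] at hb2
        have hp1 : ⟪nab Z Z, X⟫ = 0 := by linarith
        have hp2 : ⟪nab Z Z, Y⟫ = 0 := by linarith
        have hq1 : ⟪nab W W, X⟫ = 0 := by linarith
        have hq2 : ⟪nab W W, Y⟫ = 0 := by linarith
        have hr1 : ⟪nab Z W, X⟫ + ⟪nab W Z, X⟫ = 0 := by linarith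
        have hr2 : ⟪nab Z W, Y⟫ + ⟪nab W Z, Y⟫ = 0 := by linarith
        intro u v hu hv
        induction hu using Submodule.span_induction with
        | mem x hx =>
          induction hv using Submodule.span_induction with
          | mem y hy =>
            simp only [Set.mem_insert_iff, Set.mem_singleton_iff] at hx hy
            rcases hx with hx | hx <;> rcases hy with hy | hy <;> rw [hx, hy]
            · have e1 : ⟪nab Z Z + nab Z Z, X⟫ = 0 := by rw [inner_add_left]; linarith
              have e2 : ⟪nab Z Z + nab Z Z, Y⟫ = 0 := by rw [inner_add_left]; linarith
              rw [hHp, e1, e2]; simp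
            · have e1 : ⟪nab Z W + nab W Z, X⟫ = 0 := by rw [inner_add_left]; linarith
              have e2 : ⟪nab Z W + nab W Z, Y⟫ = 0 := by rw [inner_add_left]; linarith
              rw [hHp, e1, e2]; simp
            · have e1 : ⟪nab W Z + nab Z W, X⟫ = 0 := by rw [inner_add_left]; linarith
              have e2 : ⟪nab W Z + nab Z W, Y⟫ = 0 := by rw [inner_add_left]; linarith
              rw [hHp, e1, e2]; simp
            · have e1 : ⟪nab W W + nab W W, X⟫ = 0 := by rw [inner_add_left]; linarith
              have e2 : ⟪nab W W + nab W W, Y⟫ = 0 := by rw [inner_add_left]; linarith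
              rw [hHp, e1, e2]; simp
          | zero => simp
          | add a b ha hb iha ihb =>
            simp only [map_add, LinearMap.add_apply]
            have h1 : Hp (nab x a + nab a x) = 0 := iha
            have h2 : Hp (nab x b + nab b x) = 0 := ihb
            rw [map_add] at h1 h2
            rw [show Hp (nab x a) + Hp (nab x b) + (Hp (nab a x) + Hp (nab b x))
                = (Hp (nab x a) + Hp (nab a x)) + (Hp (nab x b) + Hp (nab b x)) from by abel,
              h1, h2, add_zero]
          | smul c a ha ih =>
            simp only [map_smul, LinearMap.smul_apply]
            rw [← smul_add, map_smul, ih, smul_zero]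
        | zero => simp
        | add a b ha hb iha ihb =>
          simp only [map_add, LinearMap.add_apply]
          have h1 : Hp (nab a v + nab v a) = 0 := iha
          have h2 : Hp (nab b v + nab v b) = 0 := ihb
          rw [map_add] at h1 h2
          rw [show Hp (nab a v) + Hp (nab b v) + (Hp (nab v a) + Hp (nab v b))
              = (Hp (nab a v) + Hp (nab v a)) + (Hp (nab b v) + Hp (nab v b)) from by abel,
            h1, h2, add_zero]
        | smul c a ha ih =>
          simp only [map_smul, LinearMap.smul_apply]
          rw [← smul_add, map_smul, ih, smul_zero]
      · intro htg
        have hZm : Z ∈ Submodule.span ℝ ({Z, W} : Set V4) := Submodule.subset_span (by simp)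
        have hWm : W ∈ Submodule.span ℝ ({Z, W} : Set V4) := Submodule.subset_span (by simp)
        have e1 := congrArg (fun w => ⟪w, X⟫) (htg Z Z hZm hZm)
        have e2 := congrArg (fun w => ⟪w, Y⟫) (htg Z Z hZm hZm)
        have e3 := congrArg (fun w => ⟪w, X⟫) (htg W W hWm hWm)
        have e4 := congrArg (fun w => ⟪w, Y⟫) (htg W W hWm hWm)
        have e5 := congrArg (fun w => ⟪w, X⟫) (htg Z W hZm hWm)
        have e6 := congrArg (fun w => ⟪w, Y⟫) (htg Z W hZm hWm)
        simp only [hHpX, hHpY, inner_add_left, inner_zero_left] at e1 e2 e3 e4 e5 e6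
        refine ⟨?_, ?_, ?_, ?_⟩
        · rw [hαX]; linarith
        · rw [hαY]; linarith
        · rw [hβX]; linarith
        · rw [hβY]; linarith
end
end
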